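/- arXiv:1911.05656 — 9 statements merged into one kernel-verified Lean document; each statement's English description precedes it below -/
import Mathlib

section
/- Let K be a convex body in ℝⁿ and H a ν̄-symmetric matrix function on K, i.e., for every x ∈ K the ellipsoid E_x(1) = {y : (y−x)ᵀH(x)(y−x) ≤ 1} satisfies E_x(1) ⊆ K ∩ (2x−K) ⊆ E_x(√ν̄). Then for any x, y ∈ K, the cross-ratio distance satisfies d_K(x,y) ≥ ‖x−y‖_x / √ν̄, where ‖v‖_x² = vᵀH(x)v. -/
/-!
Put `r = min ‖p - x‖ ‖x - q‖` and let `w` be the vector of length `r` pointing from `x`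
towards `p`. Then `x + w` and `x - w` lie on the chord, so `x + w ∈ K ∩ (2x - K)` and the
outer ellipsoid gives `‖w‖_x ≤ √ν̄`, i.e. `‖x - y‖_x / √ν̄ ≤ ‖x - y‖ / r`. Norms add up
along the chord, and an elementary estimate shows that the cross ratio is at least
`‖x - y‖ / r`.
-/

open Matrix

theorem Convex.add_mem_of_sameRay {E : Type*} [NormedAddCommGroup E] [NormedSpace ℝ E]
    {K : Set E} (hK : Convex ℝ K) {x q w : E} (hx : x ∈ K) (hq : q ∈ K)
    (hw : SameRay ℝ w (q - x)) (hle : ‖w‖ ≤ ‖q - x‖) : x + w ∈ K := by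
  rcases eq_or_ne (q - x) 0 with hqx | hqx
  · rw [hqx, norm_zero, norm_le_zero_iff] at hle
    simpa [hle] using hx
  have hqx' : 0 < ‖q - x‖ := norm_pos_iff.2 hqx
  have hw_eq : w = (‖w‖ / ‖q - x‖) • (q - x) := by
    rw [div_eq_inv_mul, mul_smul, hw.norm_smul_eq, inv_smul_smul₀ hqx'.ne']
  rw [hw_eq]
  exact hK.add_smul_sub_mem hx hq
    ⟨by positivity, (div_le_one hqx').2 hle⟩

theorem div_min_le_div_mul_div {a b c : ℝ} (ha : 0 < a) (hb : 0 ≤ b) (hc : 0 < c) :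
    b / min a (b + c) ≤ b * (a + (b + c)) / (a * c) := by
  rcases min_cases a (b + c) with ⟨hmin, -⟩ | ⟨hmin, -⟩ <;>
    rw [hmin, div_le_div_iff₀ (by positivity) (by positivity)]
  · nlinarith [mul_nonneg (mul_nonneg hb ha.le) (add_nonneg ha.le hb)]
  · nlinarith [mul_nonneg hb (add_nonneg (mul_nonneg ha.le hb) (sq_nonneg (b + c)))]

theorem div_min_le_crossRatio {E : Type*} [NormedAddCommGroup E] [NormedSpace ℝ E]
    {p x y q : E} (hxy : x ≠ y) (hpxy : Wbtw ℝ p x y) (hxyq : Wbtw ℝ x y q) (hpx : p ≠ x)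
    (hyq : y ≠ q) :
    ‖x - y‖ / min ‖p - x‖ ‖x - q‖ ≤ ‖x - y‖ * ‖p - q‖ / (‖p - x‖ * ‖y - q‖) := by
  have hpq : ‖p - x‖ + ‖x - q‖ = ‖p - q‖ := by
    simpa only [dist_eq_norm] using (hpxy.trans_expand_left hxyq hxy).dist_add_dist
  have hxq : ‖x - y‖ + ‖y - q‖ = ‖x - q‖ := by
    simpa only [dist_eq_norm] using hxyq.dist_add_dist
  rw [← hpq, ← hxq]
  exact div_min_le_div_mul_div (norm_sub_pos_iff.2 hpx) (norm_nonneg _)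
    (norm_sub_pos_iff.2 hyq)

theorem Matrix.sqrt_dotProduct_mulVec_div_sqrt_le_inv {ι : Type*} [Fintype ι]
    {A : Matrix ι ι ℝ} {v : ι → ℝ} {t ν : ℝ} (ht : 0 < t)
    (h : (t • v) ⬝ᵥ A *ᵥ (t • v) ≤ ν) : √(v ⬝ᵥ A *ᵥ v) / √ν ≤ t⁻¹ := by
  rw [mulVec_smul, dotProduct_smul, smul_dotProduct, smul_eq_mul, smul_eq_mul, ← mul_assoc,
    ← sq] at h
  have hsqrt : t * √(v ⬝ᵥ A *ᵥ v) ≤ √ν := by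
    simpa only [Real.sqrt_mul (sq_nonneg t), Real.sqrt_sq ht.le] using Real.sqrt_le_sqrt h
  refine div_le_of_le_mul₀ (Real.sqrt_nonneg _) (inv_nonneg.2 ht.le) ?_
  rwa [inv_mul_eq_div, le_div_iff₀' ht]

theorem stmt_3_general {n : ℕ} (K : Set (EuclideanSpace ℝ (Fin n))) (hK : Convex ℝ K)
    (H : EuclideanSpace ℝ (Fin n) → Matrix (Fin n) (Fin n) ℝ)
    (ν : ℝ)
    -- ν̄-symmetry: E_x(1) ⊆ K ∩ (2x − K) ⊆ E_x(√ν̄)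
    (hsymm : ∀ x ∈ K,
      ({y : EuclideanSpace ℝ (Fin n) |
          (fun i => y i - x i) ⬝ᵥ (H x).mulVec (fun i => y i - x i) ≤ 1}
        ⊆ K ∩ {y | (2 : ℝ) • x - y ∈ K}) ∧
      (K ∩ {y | (2 : ℝ) • x - y ∈ K} ⊆
        {y : EuclideanSpace ℝ (Fin n) |
          (fun i => y i - x i) ⬝ᵥ (H x).mulVec (fun i => y i - x i) ≤ ν}))
    (x y p q : EuclideanSpace ℝ (Fin n)) (hx : x ∈ K)
    (hp : p ∈ K) (hq : q ∈ K)
    -- the chord through x and y has endpoints p, q, in the order p, x, y, q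
    (hxc : x ∈ openSegment ℝ p y) (hyc : y ∈ openSegment ℝ x q) :
    ‖x - y‖ * ‖p - q‖ / (‖p - x‖ * ‖y - q‖) ≥
      Real.sqrt ((fun i => x i - y i) ⬝ᵥ (H x).mulVec (fun i => x i - y i)) /
        Real.sqrt ν := by
  rcases eq_or_ne x y with rfl | hxy
  · simp
  have hpx : p ≠ x := by rintro rfl; exact hxy (left_mem_openSegment_iff.1 hxc)
  have hyq : y ≠ q := by rintro rfl; exact hxy (right_mem_openSegment_iff.1 hyc)
  have hpxy := mem_segment_iff_wbtw.1 (openSegment_subset_segment _ _ _ hxc)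
  have hxyq := mem_segment_iff_wbtw.1 (openSegment_subset_segment _ _ _ hyc)
  set r := min ‖p - x‖ ‖x - q‖
  have hr : 0 < r := lt_min (norm_sub_pos_iff.2 hpx)
    (norm_sub_pos_iff.2 (hxyq.left_ne_right_of_ne_left hxy.symm))
  set t := r / ‖x - y‖
  have ht : 0 < t := div_pos hr (norm_sub_pos_iff.2 hxy)
  have hw : ‖t • (x - y)‖ = r := by
    rw [norm_smul, Real.norm_of_nonneg ht.le, div_mul_cancel₀ _ (norm_sub_pos_iff.2 hxy).ne']
  have hxp : x + t • (x - y) ∈ K :=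
    hK.add_mem_of_sameRay hx hp (hpxy.symm.sameRay_vsub.nonneg_smul_left ht.le)
      (hw ▸ min_le_left _ _)
  have hxq : x + t • (y - x) ∈ K :=
    hK.add_mem_of_sameRay hx hq (hxyq.sameRay_vsub_left.nonneg_smul_left ht.le)
      (by rw [← neg_sub, smul_neg, norm_neg, hw, norm_sub_rev]; exact min_le_right _ _)
  have hball := (hsymm x hx).2
    ⟨hxp, show (2 : ℝ) • x - _ ∈ K by convert hxq using 1; module⟩
  have hvec : (fun i => (x + t • (x - y)) i - x i) = t • fun i => x i - y i := by
    ext i; simp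
  rw [Set.mem_ofPred_eq, hvec] at hball
  calc _ ≤ t⁻¹ := sqrt_dotProduct_mulVec_div_sqrt_le_inv ht hball
    _ = ‖x - y‖ / r := inv_div _ _
    _ ≤ _ := div_min_le_crossRatio hxy hpxy hxyq hpx hyq

theorem stmt_3 {n : ℕ} (K : Set (EuclideanSpace ℝ (Fin n))) (hK : Convex ℝ K)
    (hKc : IsCompact K) (hKi : (interior K).Nonempty)
    (H : EuclideanSpace ℝ (Fin n) → Matrix (Fin n) (Fin n) ℝ)
    (ν : ℝ) (hν : 0 < ν)
    (hpd : ∀ x ∈ K, (H x).PosDef)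
    -- ν̄-symmetry: E_x(1) ⊆ K ∩ (2x − K) ⊆ E_x(√ν̄)
    (hsymm : ∀ x ∈ K,
      ({y : EuclideanSpace ℝ (Fin n) |
          (fun i => y i - x i) ⬝ᵥ (H x).mulVec (fun i => y i - x i) ≤ 1}
        ⊆ K ∩ {y | (2 : ℝ) • x - y ∈ K}) ∧
      (K ∩ {y | (2 : ℝ) • x - y ∈ K} ⊆
        {y : EuclideanSpace ℝ (Fin n) |
          (fun i => y i - x i) ⬝ᵥ (H x).mulVec (fun i => y i - x i) ≤ ν}))
    (x y p q : EuclideanSpace ℝ (Fin n)) (hx : x ∈ K) (hy : y ∈ K)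
    (hp : p ∈ K) (hq : q ∈ K)
    -- the chord through x and y has endpoints p, q, in the order p, x, y, q
    (hxc : x ∈ openSegment ℝ p y) (hyc : y ∈ openSegment ℝ x q) :
    ‖x - y‖ * ‖p - q‖ / (‖p - x‖ * ‖y - q‖) ≥
      Real.sqrt ((fun i => x i - y i) ⬝ᵥ (H x).mulVec (fun i => x i - y i)) /
        Real.sqrt ν :=
  stmt_3_general K hK H ν hsymm x y p q hx hp hq hxc hyc
end

section
/- Let Y be a real-valued random variable with E[Y] = log r for some r > 0, such that E[|Y|] < ∞. Let (Y_j) be i.i.d. copies of Y, independent of an integer random variable N with P(N = i) = 1/(e·i!) for i = 0,1,2,…, and define X = e·∏_{j=1}^{N} Y_j (with the empty product equal to 1). Then E[X] = r. -/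
/-!
Split `Ω` along the fibres `{N = i}`. On `{N = i}` the integrand is `e ∏_{j<i} Y_j`, a function of
the sequence `Y` and hence independent of `N`, so its integral there is
`P(N = i) · e · (log r)^i = (log r)^i / i!`. The same computation with `|Y_j|` gives the bound
`∑ E|Y|^i / i! < ∞` that justifies exchanging sum and integral, and the exponential series sums
to `exp (log r) = r`.
-/

open MeasureTheory ProbabilityTheory Finset Real
open scoped ENNReal

universe u

section

variable {Ω : Type*} [MeasurableSpace Ω] {μ : Measure Ω}

namespace ProbabilityTheory

lemma iIndepFun.indepFun_none_pi_some {ι : Type*} {α β : Type u} [mα : MeasurableSpace α]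
    [mβ : MeasurableSpace β] {N : Ω → α} {Y : ι → Ω → β}
    (h : iIndepFun
      (m := fun i : Option ι =>
        Option.rec (motive := fun i => MeasurableSpace (Option.rec α (fun _ => β) i)) mα (fun _ => mβ) i)
      (fun i : Option ι => Option.rec (motive := fun i => Ω → Option.rec α (fun _ => β) i)
        N (fun j => Y j) i) μ)
    (hN : Measurable N) (hY : ∀ j, Measurable (Y j)) :
    IndepFun N (fun ω j => Y j ω) μ := by
  rw [iIndepFun_iff_iIndep] at h
  have hsplit := indep_iSup_of_disjoint
    (fun i => by cases i; exacts [hN.comap_le, (hY _).comap_le]) h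
    (S := {none}) (T := Set.range some)
    (Set.disjoint_singleton_left.2 fun ⟨_, hj⟩ => Option.some_ne_none _ hj)
  rw [IndepFun_iff_Indep]
  refine indep_of_indep_of_le_right (indep_of_indep_of_le_left hsplit ?_) ?_
  · exact le_iSup₂_of_le none rfl le_rfl
  · rw [MeasurableSpace.pi, MeasurableSpace.comap_iSup]
    refine iSup_le fun j => ?_
    rw [MeasurableSpace.comap_comp]
    exact le_iSup₂_of_le (some j) ⟨j, rfl⟩ le_rfl

lemma iIndepFun.integrable_finset_prod {ι : Type*} {X : ι → Ω → ℝ} (hX : iIndepFun X μ)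
    (hmeas : ∀ i, Measurable (X i)) (hint : ∀ i, Integrable (X i) μ) (s : Finset ι) :
    Integrable (fun ω => ∏ i ∈ s, X i ω) μ := by
  refine ⟨(s.measurable_fun_prod fun i _ => hmeas i).aestronglyMeasurable, ?_⟩
  have hnorm : iIndepFun (fun i ω => (‖X i ω‖₊ : ℝ≥0∞)) μ :=
    hX.comp (fun _ x => (‖x‖₊ : ℝ≥0∞)) fun _ => measurable_nnnorm.coe_nnreal_ennreal
  simp only [HasFiniteIntegral, enorm_eq_nnnorm, nnnorm_prod, ENNReal.ofNNReal_finsetProd]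
  rw [lintegral_prod_eq_prod_lintegral_of_indepFun s _ hnorm
    fun i => (hmeas i).nnnorm.coe_nnreal_ennreal]
  exact ENNReal.prod_lt_top fun i _ => by
    simpa only [HasFiniteIntegral, enorm_eq_nnnorm] using (hint i).2

lemma iIndepFun.integral_finset_prod {ι : Type*} {X : ι → Ω → ℝ} (hX : iIndepFun X μ)
    (hmeas : ∀ i, Measurable (X i)) (s : Finset ι) :
    ∫ ω, ∏ i ∈ s, X i ω ∂μ = ∏ i ∈ s, ∫ ω, X i ω ∂μ := by
  have h := (hX.precomp (Subtype.val_injective (p := (· ∈ s)))).integral_fun_prod_eq_prod_integral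
      fun i => (hmeas i).aestronglyMeasurable
  simp_rw [← Finset.prod_coe_sort s]
  exact h

lemma IndepFun.setIntegral_preimage_eq_mul {α β : Type*} [MeasurableSpace α] [MeasurableSpace β]
    {N : Ω → α} {X : Ω → β} (hind : IndepFun N X μ) (hN : Measurable N) (hX : Measurable X)
    {f : β → ℝ} (hf : Measurable f) {s : Set α} (hs : MeasurableSet s) :
    ∫ ω in N ⁻¹' s, f (X ω) ∂μ = μ.real (N ⁻¹' s) * ∫ ω, f (X ω) ∂μ :=
  ((IndepFun_iff_Indep N X μ).1 hind).setIntegral_eq_mul hN.comap_le hX.aemeasurable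
    ⟨s, hs, rfl⟩ hf.aestronglyMeasurable

end ProbabilityTheory

lemma integral_eq_tsum_setIntegral_fiber {α E : Type*} [Countable α] [MeasurableSpace α]
    [MeasurableSingletonClass α] [NormedAddCommGroup E] [NormedSpace ℝ E] {N : Ω → α}
    (hN : Measurable N) {F : α → Ω → E} (hF : ∀ a, Integrable (F a) μ)
    (hsum : Summable fun a => ∫ ω in N ⁻¹' {a}, ‖F a ω‖ ∂μ) :
    ∫ ω, F (N ω) ω ∂μ = ∑' a, ∫ ω in N ⁻¹' {a}, F a ω ∂μ := by
  have hfiber : ∀ a, MeasurableSet (N ⁻¹' {a}) := fun a => hN (measurableSet_singleton a)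
  have hcover : ⋃ a, N ⁻¹' {a} = Set.univ :=
    Set.eq_univ_of_forall fun ω => Set.mem_iUnion.2 ⟨N ω, rfl⟩
  have hon : ∀ a, Set.EqOn (fun ω => F (N ω) ω) (F a) (N ⁻¹' {a}) := fun a ω (hω : N ω = a) =>
    congrArg (F · ω) hω
  have hint : IntegrableOn (fun ω => F (N ω) ω) (⋃ a, N ⁻¹' {a}) μ := by
    refine integrableOn_iUnion_of_summable_integral_norm
      (fun a => ((hF a).integrableOn).congr_fun (hon a).symm (hfiber a)) ?_
    refine hsum.congr fun a => setIntegral_congr_fun (hfiber a) fun ω hω => ?_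
    rw [← hon a hω]
  rw [← setIntegral_univ, ← hcover, integral_iUnion hfiber (pairwise_disjoint_fiber N) hint]
  exact tsum_congr fun a => setIntegral_congr_fun (hfiber a) (hon a)

theorem integral_prod_range_comp_eq_tsum {N : Ω → ℕ} {Y : ℕ → Ω → ℝ} (hN : Measurable N)
    (hY : ∀ j, Measurable (Y j)) (hint : ∀ j, Integrable (Y j) μ) (hYindep : iIndepFun Y μ)
    (hNY : IndepFun N (fun ω j => Y j ω) μ)
    (hsum : Summable fun i => μ.real (N ⁻¹' {i}) * ∏ j ∈ range i, ∫ ω, ‖Y j ω‖ ∂μ) :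
    ∫ ω, ∏ j ∈ range (N ω), Y j ω ∂μ =
      ∑' i, μ.real (N ⁻¹' {i}) * ∏ j ∈ range i, ∫ ω, Y j ω ∂μ := by
  have hfiber : ∀ i {f : ℝ → ℝ}, Measurable f → ∫ ω in N ⁻¹' {i}, f (∏ j ∈ range i, Y j ω) ∂μ =
      μ.real (N ⁻¹' {i}) * ∫ ω, f (∏ j ∈ range i, Y j ω) ∂μ := fun i f hf =>
    hNY.setIntegral_preimage_eq_mul (f := fun y => f (∏ j ∈ range i, y j)) hN
      (measurable_pi_lambda _ hY)
      (hf.comp (Finset.measurable_prod _ fun j _ => measurable_pi_apply j))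
      (measurableSet_singleton i)
  have habs : iIndepFun (fun j ω => ‖Y j ω‖) μ :=
    hYindep.comp (fun _ => norm) fun _ => measurable_norm
  rw [integral_eq_tsum_setIntegral_fiber hN (F := fun i ω => ∏ j ∈ range i, Y j ω)
    (fun i => hYindep.integrable_finset_prod hY hint _)]
  · exact tsum_congr fun i =>
      (hfiber i measurable_id).trans (congrArg _ (hYindep.integral_finset_prod hY _))
  · refine hsum.congr fun i => ?_
    rw [hfiber i measurable_norm]
    simp_rw [norm_prod]
    rw [habs.integral_finset_prod fun j => (hY j).norm]

end

theorem stmt_5_general {Ω : Type*} [MeasurableSpace Ω] (μ : Measure Ω)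
    (r : ℝ) (hr : 0 < r)
    (Y : ℕ → Ω → ℝ) (N : Ω → ℕ)
    (hYmeas : ∀ j, Measurable (Y j)) (hNmeas : Measurable N)
    -- E[|Y|] < ∞
    (hint : Integrable (Y 0) μ)
    -- E[Y] = log r
    (hmean : ∀ j, ∫ ω, Y j ω ∂μ = Real.log r)
    -- the Y_j are identically distributed
    (hident : ∀ j, Measure.map (Y j) μ = Measure.map (Y 0) μ)
    -- N, Y_0, Y_1, … are jointly independent
    (hindep : iIndepFun
      (m := fun i : Option ℕ => Option.rec (motive := fun i => MeasurableSpace (Option.rec ℕ (fun _ => ℝ) i))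
        (inferInstance : MeasurableSpace ℕ) (fun _ => (inferInstance : MeasurableSpace ℝ)) i)
      (fun i : Option ℕ => Option.rec (motive := fun i => Ω → Option.rec ℕ (fun _ => ℝ) i)
        N (fun j => Y j) i) μ)
    -- N is Poisson(1): P(N = i) = 1/(e·i!)
    (hN : ∀ i : ℕ, μ {ω | N ω = i} = ENNReal.ofReal (1 / (Real.exp 1 * Nat.factorial i))) :
    ∫ ω, (Real.exp 1 * ∏ j ∈ Finset.range (N ω), Y j ω) ∂μ = r := by
  have hdist : ∀ j, IdentDistrib (Y j) (Y 0) μ μ := fun j =>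
    ⟨(hYmeas j).aemeasurable, (hYmeas 0).aemeasurable, hident j⟩
  have hP : ∀ i : ℕ, μ.real (N ⁻¹' {i}) = (exp 1)⁻¹ * (i.factorial : ℝ)⁻¹ := fun i => by
    change (μ {ω | N ω = i}).toReal = _
    rw [hN i, ENNReal.toReal_ofReal (by positivity), one_div, mul_inv]
  have hsum : Summable fun i => μ.real (N ⁻¹' {i}) * ∏ j ∈ range i, ∫ ω, ‖Y j ω‖ ∂μ := by
    have hnorm : ∀ j, ∫ ω, ‖Y j ω‖ ∂μ = ∫ ω, ‖Y 0 ω‖ ∂μ := fun j =>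
      ((hdist j).comp measurable_norm).integral_eq
    simp_rw [hP, hnorm, prod_const, card_range]
    exact ((summable_pow_div_factorial (∫ ω, ‖Y 0 ω‖ ∂μ)).mul_left (exp 1)⁻¹).congr fun i => by
      ring
  rw [integral_const_mul, integral_prod_range_comp_eq_tsum hNmeas hYmeas
    (fun j => (hdist j).integrable_iff.2 hint)
    (hindep.precomp (g := some) (Option.some_injective ℕ))
    (hindep.indepFun_none_pi_some hNmeas hYmeas) hsum]
  simp_rw [hP, hmean, prod_const, card_range]
  have hterm : ∀ i : ℕ, exp 1 * ((exp 1)⁻¹ * (i.factorial : ℝ)⁻¹ * log r ^ i) =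
      log r ^ i / i.factorial := fun i => by
    field_simp
  rw [← tsum_mul_left, tsum_congr hterm, (NormedSpace.expSeries_div_hasSum_exp (log r)).tsum_eq,
    ← exp_eq_exp_ℝ, exp_log hr]

theorem stmt_5 {Ω : Type*} [MeasurableSpace Ω] (μ : Measure Ω) [IsProbabilityMeasure μ]
    (r : ℝ) (hr : 0 < r)
    (Y : ℕ → Ω → ℝ) (N : Ω → ℕ)
    (hYmeas : ∀ j, Measurable (Y j)) (hNmeas : Measurable N)
    -- E[|Y|] < ∞
    (hint : Integrable (Y 0) μ)
    -- E[Y] = log r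
    (hmean : ∀ j, ∫ ω, Y j ω ∂μ = Real.log r)
    -- the Y_j are identically distributed
    (hident : ∀ j, Measure.map (Y j) μ = Measure.map (Y 0) μ)
    -- N, Y_0, Y_1, … are jointly independent
    (hindep : iIndepFun
      (m := fun i : Option ℕ => Option.rec (motive := fun i => MeasurableSpace (Option.rec ℕ (fun _ => ℝ) i))
        (inferInstance : MeasurableSpace ℕ) (fun _ => (inferInstance : MeasurableSpace ℝ)) i)
      (fun i : Option ℕ => Option.rec (motive := fun i => Ω → Option.rec ℕ (fun _ => ℝ) i)
        N (fun j => Y j) i) μ)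
    -- N is Poisson(1): P(N = i) = 1/(e·i!)
    (hN : ∀ i : ℕ, μ {ω | N ω = i} = ENNReal.ofReal (1 / (Real.exp 1 * Nat.factorial i))) :
    ∫ ω, (Real.exp 1 * ∏ j ∈ Finset.range (N ω), Y j ω) ∂μ = r :=
  stmt_5_general μ r hr Y N hYmeas hNmeas hint hmean hident hindep hN
end

section
/- Let A ∈ ℝ^{m×n} have full column rank, W ∈ ℝ^{m×m} be positive definite diagonal, and define H(t) = Aᵀ(I + t(W−I))A for t ∈ [0,1], assuming H(t) is invertible for all t ∈ [0,1]. Let v ~ N(0, I_n) be a standard Gaussian vector in ℝⁿ and t be uniform on [0,1], independent of v. Then E_t E_v [ vᵀ H(t)^{-1} Aᵀ(W−I)A v ] = log det(AᵀWA) − log det(AᵀA). -/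
open Matrix MeasureTheory ProbabilityTheory Real Filter Polynomial
open scoped NNReal ENNReal

lemma sq_exp_bound (x : ℝ) : x ^ 2 * rexp (-2⁻¹ * x ^ 2) ≤ 4 * rexp (-4⁻¹ * x ^ 2) := by
  have h1 := Real.add_one_le_exp (4⁻¹ * x ^ 2)
  have h2 := Real.exp_pos (-2⁻¹ * x ^ 2)
  have h3 : rexp (-2⁻¹ * x ^ 2) * rexp (4⁻¹ * x ^ 2) = rexp (-4⁻¹ * x ^ 2) := by
    rw [← Real.exp_add]; ring_nf
  nlinarith [sq_nonneg x, Real.exp_pos (4⁻¹ * x ^ 2)]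

lemma abs_exp_bound (x : ℝ) : |x| * rexp (-2⁻¹ * x ^ 2) ≤ 2 * rexp (-4⁻¹ * x ^ 2) := by
  have h1 := Real.add_one_le_exp (4⁻¹ * x ^ 2)
  have h2 := Real.exp_pos (-2⁻¹ * x ^ 2)
  have h3 : rexp (-2⁻¹ * x ^ 2) * rexp (4⁻¹ * x ^ 2) = rexp (-4⁻¹ * x ^ 2) := by
    rw [← Real.exp_add]; ring_nf
  nlinarith [sq_nonneg (|x| - 2), sq_abs x, Real.exp_pos (4⁻¹ * x ^ 2)]

lemma integrable_sq_mul_exp : Integrable (fun x : ℝ => x ^ 2 * rexp (-2⁻¹ * x ^ 2)) := by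
  refine Integrable.mono' ((integrable_exp_neg_mul_sq (by norm_num : (0:ℝ) < 4⁻¹)).const_mul 4)
    ?_ (Filter.Eventually.of_forall fun x => ?_)
  · exact ((continuous_pow 2).mul ((continuous_const.mul (continuous_pow 2)).rexp)).aestronglyMeasurable
  · rw [Real.norm_eq_abs, abs_of_nonneg (by positivity)]
    exact sq_exp_bound x

lemma tendsto_exp_quarter_atTop : Tendsto (fun x : ℝ => rexp (-4⁻¹ * x ^ 2)) atTop (nhds 0) :=
  Real.tendsto_exp_atBot.comp
    ((tendsto_pow_atTop two_ne_zero).const_mul_atTop_of_neg (by norm_num : (-4⁻¹ : ℝ) < 0))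

lemma tendsto_exp_quarter_atBot : Tendsto (fun x : ℝ => rexp (-4⁻¹ * x ^ 2)) atBot (nhds 0) := by
  have h := tendsto_exp_quarter_atTop.comp tendsto_neg_atBot_atTop
  simpa [Function.comp_def] using h

lemma tendsto_mul_exp_atTop : Tendsto (fun x : ℝ => -x * rexp (-2⁻¹ * x ^ 2)) atTop (nhds 0) := by
  refine squeeze_zero_norm (a := fun x : ℝ => 2 * rexp (-4⁻¹ * x ^ 2)) (fun x => ?_)
    (by simpa using tendsto_exp_quarter_atTop.const_mul 2)
  · rw [norm_mul, norm_neg, Real.norm_eq_abs, Real.norm_eq_abs,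
      abs_of_nonneg (Real.exp_pos _).le]
    exact abs_exp_bound x

lemma tendsto_mul_exp_atBot : Tendsto (fun x : ℝ => -x * rexp (-2⁻¹ * x ^ 2)) atBot (nhds 0) := by
  refine squeeze_zero_norm (a := fun x : ℝ => 2 * rexp (-4⁻¹ * x ^ 2)) (fun x => ?_)
    (by simpa using tendsto_exp_quarter_atBot.const_mul 2)
  · rw [norm_mul, norm_neg, Real.norm_eq_abs, Real.norm_eq_abs,
      abs_of_nonneg (Real.exp_pos _).le]
    exact abs_exp_bound x

lemma integral_sq_mul_exp : ∫ x : ℝ, x ^ 2 * rexp (-2⁻¹ * x ^ 2) = Real.sqrt (2 * Real.pi) := by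
  have hderiv : ∀ x : ℝ, HasDerivAt (fun x : ℝ => -x * rexp (-2⁻¹ * x ^ 2))
      (x ^ 2 * rexp (-2⁻¹ * x ^ 2) - rexp (-2⁻¹ * x ^ 2)) x := by
    intro x
    have h := ((hasDerivAt_pow 2 x).const_mul (-2⁻¹ : ℝ)).exp
    have h2 := ((hasDerivAt_id x).neg).mul h
    convert h2 using 1
    · rfl
    · rfl
    · rfl
    simp only [Pi.neg_apply, id_eq]
    ring
  have hint : Integrable (fun x : ℝ => x ^ 2 * rexp (-2⁻¹ * x ^ 2) - rexp (-2⁻¹ * x ^ 2)) :=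
    integrable_sq_mul_exp.sub (integrable_exp_neg_mul_sq (by norm_num : (0:ℝ) < 2⁻¹))
  have key := MeasureTheory.integral_of_hasDerivAt_of_tendsto hderiv hint
    tendsto_mul_exp_atBot tendsto_mul_exp_atTop
  rw [sub_zero] at key
  have hsplit : ∫ x : ℝ, (x ^ 2 * rexp (-2⁻¹ * x ^ 2) - rexp (-2⁻¹ * x ^ 2))
      = (∫ x : ℝ, x ^ 2 * rexp (-2⁻¹ * x ^ 2)) - ∫ x : ℝ, rexp (-2⁻¹ * x ^ 2) :=
    integral_sub integrable_sq_mul_exp (integrable_exp_neg_mul_sq (by norm_num : (0:ℝ) < 2⁻¹))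
  have hg : ∫ x : ℝ, rexp (-2⁻¹ * x ^ 2) = Real.sqrt (2 * Real.pi) := by
    have := integral_gaussian (2⁻¹ : ℝ)
    rw [this]
    congr 1
    ring
  rw [hsplit, hg] at key
  linarith

lemma gaussianPDFReal_std (x : ℝ) :
    gaussianPDFReal 0 1 x = (Real.sqrt (2 * Real.pi))⁻¹ * rexp (-2⁻¹ * x ^ 2) := by
  simp only [gaussianPDFReal, NNReal.coe_one, mul_one, sub_zero]
  ring_nf

lemma integral_gaussianReal_transfer (g : ℝ → ℝ) :
    ∫ x, g x ∂(gaussianReal 0 1) = ∫ x, gaussianPDFReal 0 1 x * g x := by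
  rw [gaussianReal_of_var_ne_zero 0 one_ne_zero]
  have h : gaussianPDF 0 1 = fun x => ((Real.toNNReal (gaussianPDFReal 0 1 x) : ℝ≥0) : ℝ≥0∞) := by
    ext x
    simp [gaussianPDF, ENNReal.ofReal]
  rw [h, integral_withDensity_eq_integral_smul
    ((measurable_gaussianPDFReal 0 1).real_toNNReal) g]
  congr 1
  ext x
  rw [NNReal.smul_def, smul_eq_mul, Real.coe_toNNReal _ (gaussianPDFReal_nonneg 0 1 x)]

lemma integrable_gaussianReal_iff (g : ℝ → ℝ) :
    Integrable g (gaussianReal 0 1) ↔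
      Integrable (fun x => g x * gaussianPDFReal 0 1 x) volume := by
  rw [gaussianReal_of_var_ne_zero 0 one_ne_zero,
    integrable_withDensity_iff (measurable_gaussianPDF 0 1)
      (Filter.Eventually.of_forall fun x => ENNReal.ofReal_lt_top)]
  apply integrable_congr
  filter_upwards with x
  rw [gaussianPDF, ENNReal.toReal_ofReal (gaussianPDFReal_nonneg 0 1 x)]

lemma gaussian_integrable_id : Integrable (fun x : ℝ => x) (gaussianReal 0 1) := by
  rw [integrable_gaussianReal_iff]
  have : Integrable (fun x : ℝ => (Real.sqrt (2 * Real.pi))⁻¹ * (x * rexp (-2⁻¹ * x ^ 2))) :=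
    (integrable_mul_exp_neg_mul_sq (by norm_num : (0:ℝ) < 2⁻¹)).const_mul _
  apply this.congr
  filter_upwards with x
  rw [gaussianPDFReal_std]
  ring

lemma gaussian_integrable_sq : Integrable (fun x : ℝ => x ^ 2) (gaussianReal 0 1) := by
  rw [integrable_gaussianReal_iff]
  have : Integrable (fun x : ℝ => (Real.sqrt (2 * Real.pi))⁻¹ * (x ^ 2 * rexp (-2⁻¹ * x ^ 2))) :=
    integrable_sq_mul_exp.const_mul _
  apply this.congr
  filter_upwards with x
  rw [gaussianPDFReal_std]
  ring

lemma gaussian_moment_one : ∫ x, x ∂(gaussianReal 0 1) = 0 := by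
  rw [integral_gaussianReal_transfer]
  have hodd : ∀ x : ℝ, gaussianPDFReal 0 1 (-x) * (-x) = -(gaussianPDFReal 0 1 x * x) := by
    intro x
    rw [gaussianPDFReal_std, gaussianPDFReal_std]
    ring_nf
  have h := MeasureTheory.integral_neg_eq_self (fun x => gaussianPDFReal 0 1 x * x)
    (volume : Measure ℝ)
  simp_rw [hodd, integral_neg] at h
  linarith

lemma gaussian_moment_two : ∫ x, x ^ 2 ∂(gaussianReal 0 1) = 1 := by
  rw [integral_gaussianReal_transfer]
  have h : ∀ x : ℝ, gaussianPDFReal 0 1 x * x ^ 2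
      = (Real.sqrt (2 * Real.pi))⁻¹ * (x ^ 2 * rexp (-2⁻¹ * x ^ 2)) := by
    intro x; rw [gaussianPDFReal_std]; ring
  simp_rw [h]
  rw [integral_const_mul, integral_sq_mul_exp]
  rw [inv_mul_cancel₀]
  positivity

section PiGauss
variable {n : ℕ}

noncomputable local instance : MeasureSpace ℝ := ⟨gaussianReal 0 1⟩

local instance : IsProbabilityMeasure (volume : Measure ℝ) :=
  inferInstanceAs (IsProbabilityMeasure (gaussianReal 0 1))

local instance : SigmaFinite (volume : Measure ℝ) :=
  inferInstanceAs (SigmaFinite (gaussianReal 0 1))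

lemma coord_fun_integrable (i j k : Fin n) :
    Integrable (fun x : ℝ => (if k = i then x else 1) * (if k = j then x else 1))
      (gaussianReal 0 1) := by
  rcases eq_or_ne k i with rfl | hi <;> rcases eq_or_ne k j with rfl | hj <;>
    simp_all [← pow_two]
  · exact gaussian_integrable_sq
  · exact gaussian_integrable_id
  · exact gaussian_integrable_id

lemma gaussian_cov (i j : Fin n) :
    ∫ v : Fin n → ℝ, v i * v j ∂(Measure.pi fun _ : Fin n => gaussianReal 0 1)
      = if i = j then 1 else 0 := by
  have hprod : ∀ v : Fin n → ℝ,
      v i * v j = ∏ k, ((if k = i then v k else 1) * (if k = j then v k else 1)) := by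
    intro v
    rw [Finset.prod_mul_distrib, Finset.prod_ite_eq', Finset.prod_ite_eq']
    simp
  simp_rw [hprod]
  have hvol : (Measure.pi fun _ : Fin n => gaussianReal 0 1) = (volume : Measure (Fin n → ℝ)) := rfl
  rw [hvol]
  erw [MeasureTheory.integral_fintype_prod_eq_prod
    (f := fun k x => (if k = i then x else 1) * (if k = j then x else 1))]
  rcases eq_or_ne i j with rfl | hij
  · simp only [if_pos rfl]
    apply Finset.prod_eq_one
    intro k _
    rcases eq_or_ne k i with rfl | hk
    · simp only [if_pos rfl]
      simp only [← pow_two]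
      exact gaussian_moment_two
    · simp [hk]
  · rw [if_neg hij]
    apply Finset.prod_eq_zero (Finset.mem_univ i)
    simp only [hij, if_true, if_false, mul_one]
    exact gaussian_moment_one

lemma gaussian_quad_form (M : Matrix (Fin n) (Fin n) ℝ) :
    ∫ v, v ⬝ᵥ M.mulVec v ∂(Measure.pi fun _ : Fin n => gaussianReal 0 1) = M.trace := by
  have hexp : ∀ v : Fin n → ℝ,
      v ⬝ᵥ M.mulVec v = ∑ p : Fin n × Fin n, M p.1 p.2 * (v p.1 * v p.2) := by
    intro v
    rw [Fintype.sum_prod_type]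
    simp only [dotProduct, mulVec, dotProduct, Finset.mul_sum]
    congr 1; ext i; congr 1; ext j; ring
  simp_rw [hexp]
  have hint : ∀ p : Fin n × Fin n, Integrable (fun v : Fin n → ℝ => M p.1 p.2 * (v p.1 * v p.2))
      (Measure.pi fun _ : Fin n => gaussianReal 0 1) := by
    intro p
    apply Integrable.const_mul
    have hprod : ∀ v : Fin n → ℝ,
        v p.1 * v p.2
          = ∏ k, ((if k = p.1 then v k else 1) * (if k = p.2 then v k else 1)) := by
      intro v
      rw [Finset.prod_mul_distrib, Finset.prod_ite_eq', Finset.prod_ite_eq']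
      simp
    simp_rw [hprod]
    exact MeasureTheory.Integrable.fintype_prod_dep fun k => coord_fun_integrable p.1 p.2 k
  rw [integral_finset_sum _ fun p _ => hint p]
  simp_rw [integral_const_mul, gaussian_cov]
  rw [Matrix.trace]
  simp only [mul_ite, mul_one, mul_zero]
  rw [Fintype.sum_prod_type]
  simp [Finset.sum_ite_eq', diag]
end PiGauss

variable {n : ℕ}

lemma det_one_add_smul_hasDerivAt (M : Matrix (Fin n) (Fin n) ℝ) :
    HasDerivAt (fun r : ℝ => (1 + r • M).det) M.trace 0 := by
  set P : Polynomial ℝ := ((1 + (X : ℝ[X]) • M.map C).det).divX.divX with hP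
  have hfun : (fun r : ℝ => (1 + r • M).det)
      = fun r : ℝ => 1 + M.trace * r + P.eval r * r ^ 2 :=
    funext fun r => Matrix.det_one_add_smul r M
  rw [hfun]
  have h1 : HasDerivAt (fun r : ℝ => 1 + M.trace * r) M.trace 0 := by
    simpa using ((hasDerivAt_id (0:ℝ)).const_mul M.trace).const_add 1
  have h2 : HasDerivAt (fun r : ℝ => P.eval r * r ^ 2)
      (P.derivative.eval 0 * 0 ^ 2 + P.eval 0 * (2 * 0 ^ 1)) 0 :=
    (P.hasDerivAt 0).mul (hasDerivAt_pow 2 0)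
  have h3 := h1.add h2
  convert h3 using 1
  · rfl
  · rfl
  · rfl
  simp

lemma det_affine_hasDerivAt (C B : Matrix (Fin n) (Fin n) ℝ) (t₀ : ℝ)
    (hdet : IsUnit (C + t₀ • B).det) :
    HasDerivAt (fun t : ℝ => (C + t • B).det)
      ((C + t₀ • B).det * (((C + t₀ • B)⁻¹ * B).trace)) t₀ := by
  set H0 := C + t₀ • B with hH0
  have hinv : H0 * H0⁻¹ = 1 := Matrix.mul_nonsing_inv _ hdet
  have key : ∀ t : ℝ, C + t • B = H0 * (1 + (t - t₀) • (H0⁻¹ * B)) := by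
    intro t
    rw [Matrix.mul_add, Matrix.mul_one, Matrix.mul_smul, ← Matrix.mul_assoc, hinv,
      Matrix.one_mul, hH0]
    rw [add_assoc, ← add_smul]
    ring_nf
  have hg : HasDerivAt (fun s : ℝ => (1 + s • (H0⁻¹ * B)).det) ((H0⁻¹ * B).trace) 0 :=
    det_one_add_smul_hasDerivAt _
  have hcomp : HasDerivAt (fun t : ℝ => (1 + (t - t₀) • (H0⁻¹ * B)).det)
      ((H0⁻¹ * B).trace) t₀ := by
    have hu : HasDerivAt (fun x : ℝ => x - t₀) 1 t₀ := (hasDerivAt_id t₀).sub_const t₀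
    have hg' : HasDerivAt (fun s : ℝ => (1 + s • (H0⁻¹ * B)).det) ((H0⁻¹ * B).trace)
        ((fun x : ℝ => x - t₀) t₀) := by simpa using hg
    have := HasDerivAt.comp (h := fun x : ℝ => x - t₀)
      (h₂ := fun s : ℝ => (1 + s • (H0⁻¹ * B)).det) (x := t₀) hg' hu
    simpa [Function.comp_def] using this
  have := hcomp.const_mul H0.det
  convert this using 1
  · rfl
  · rfl
  funext t
  rw [key t, Matrix.det_mul]

theorem stmt_6 {m n : ℕ} (A : Matrix (Fin m) (Fin n) ℝ)
    (W : Matrix (Fin m) (Fin m) ℝ) (hWdiag : W.IsDiag) (hWpd : W.PosDef)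
    -- A has full column rank
    (hA : (Aᵀ * A).PosDef)
    (H : ℝ → Matrix (Fin n) (Fin n) ℝ)
    (hH : ∀ t : ℝ, H t = Aᵀ * (1 + t • (W - 1)) * A)
    (hHinv : ∀ t ∈ Set.Icc (0 : ℝ) 1, IsUnit (H t).det) :
    ∫ t in (0 : ℝ)..1,
        ∫ v, v ⬝ᵥ ((H t)⁻¹ * (Aᵀ * (W - 1) * A)).mulVec v
          ∂(Measure.pi fun _ : Fin n => gaussianReal 0 1)
      = Real.log (Aᵀ * W * A).det - Real.log (Aᵀ * A).det := by
  set B : Matrix (Fin n) (Fin n) ℝ := Aᵀ * (W - 1) * A with hB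
  set C : Matrix (Fin n) (Fin n) ℝ := Aᵀ * A with hC
  have hHt : ∀ t : ℝ, H t = C + t • B := by
    intro t
    rw [hH t, hB, hC, Matrix.mul_add, Matrix.add_mul, Matrix.mul_one, Matrix.mul_smul,
      Matrix.smul_mul, Matrix.mul_assoc]
  have huIcc : Set.uIcc (0 : ℝ) 1 = Set.Icc (0 : ℝ) 1 := Set.uIcc_of_le zero_le_one
  have hdet : ∀ t ∈ Set.uIcc (0 : ℝ) 1, IsUnit (C + t • B).det := by
    intro t ht
    rw [← hHt t]
    exact hHinv t (huIcc ▸ ht)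
  -- rewrite the inner integral as a trace
  simp only [gaussian_quad_form]
  -- the derivative of the log-determinant
  have hderiv : ∀ t ∈ Set.uIcc (0 : ℝ) 1,
      HasDerivAt (fun t : ℝ => Real.log ((C + t • B).det))
        (((C + t • B)⁻¹ * B).trace) t := by
    intro t ht
    have hd := det_affine_hasDerivAt C B t (hdet t ht)
    have hne : (C + t • B).det ≠ 0 := (hdet t ht).ne_zero
    have hlog := (Real.hasDerivAt_log hne).comp t hd
    convert hlog using 1
    · rfl
    · rfl
    · rfl
    field_simp
  -- continuity of the integrand
  have hcontM : Continuous fun t : ℝ => C + t • B :=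
    continuous_const.add (continuous_id.smul continuous_const)
  have htr_eq : ∀ t : ℝ, ((C + t • B)⁻¹ * B).trace
      = ((C + t • B).det)⁻¹ * ((C + t • B).adjugate * B).trace := by
    intro t
    rw [Matrix.inv_def, Ring.inverse_eq_inv', Matrix.smul_mul, Matrix.trace_smul, smul_eq_mul]
  have hcont : ContinuousOn (fun t : ℝ => ((C + t • B)⁻¹ * B).trace) (Set.uIcc 0 1) := by
    simp only [htr_eq]
    apply ContinuousOn.mul
    · exact (hcontM.matrix_det.continuousOn).inv₀ fun t ht => (hdet t ht).ne_zero
    · exact ((hcontM.matrix_adjugate.matrix_mul continuous_const).matrix_trace).continuousOn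
  have hint : IntervalIntegrable (fun t : ℝ => ((C + t • B)⁻¹ * B).trace) volume 0 1 :=
    hcont.intervalIntegrable
  have hFTC := intervalIntegral.integral_eq_sub_of_hasDerivAt hderiv hint
  have hH1 : C + (1 : ℝ) • B = Aᵀ * W * A := by
    rw [hB, hC, one_smul, Matrix.mul_sub, Matrix.mul_one, Matrix.sub_mul]
    abel
  have hH0 : C + (0 : ℝ) • B = Aᵀ * A := by rw [zero_smul, add_zero, hC]
  calc ∫ t in (0:ℝ)..1, ((H t)⁻¹ * B).trace
      = ∫ t in (0:ℝ)..1, (((C + t • B))⁻¹ * B).trace := by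
        apply intervalIntegral.integral_congr
        intro t ht
        simp only [hHt]
    _ = Real.log ((C + (1:ℝ) • B).det) - Real.log ((C + (0:ℝ) • B).det) := hFTC
    _ = Real.log (Aᵀ * W * A).det - Real.log (Aᵀ * A).det := by rw [hH1, hH0]
end

section
/- The Hessian of the log barrier is strongly self-concordant: for a polytope P = {x : Ax > b} with A ∈ ℝ^{m×n}, let S_x = Diag(Ax−b) and H(x) = AᵀS_x^{-2}A. Then for any x in the interior of P and any direction h, ‖H(x)^{-1/2} DH(x)[h] H(x)^{-1/2}‖_F ≤ 2‖h‖_{H(x)}. -/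
/-!
Write `N = S_x⁻¹ A`. Then `H(x) = Nᵀ N` and `DH(x)[h] = Nᵀ W N` with `W = Diag(-2 N h)`.
If `R² = H(x)⁻¹` with `R` symmetric, the matrix `B = N R` has orthonormal columns, and
`R DH(x)[h] R = Bᵀ W B`. Since `B Bᵀ ⪯ I`, compressing by `B` cannot increase the Frobenius norm,
so `‖R DH(x)[h] R‖_F ≤ ‖W‖_F = 2 ‖N h‖ = 2 ‖h‖_{H(x)}`.
-/

open Matrix

/-- Frobenius norm of a real matrix. -/
noncomputable def frobNorm {n m : ℕ} (M : Matrix (Fin n) (Fin m) ℝ) : ℝ :=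
  Real.sqrt (∑ i, ∑ j, (M i j) ^ 2)

/-- Local norm `‖v‖_H = sqrt(vᵀ H v)`. -/
noncomputable def locNorm {n : ℕ} (H : Matrix (Fin n) (Fin n) ℝ) (v : Fin n → ℝ) : ℝ :=
  Real.sqrt (v ⬝ᵥ H.mulVec v)

section Isometry

variable {ι κ μ : Type*} [Fintype ι] [Fintype κ] [Fintype μ] [DecidableEq ι] [DecidableEq κ]

lemma posSemidef_one_sub_mul_transpose_of_isometry {B : Matrix ι κ ℝ} (hB : Bᵀ * B = 1) :
    (1 - B * Bᵀ).PosSemidef := by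
  have hQ : (1 - B * Bᵀ)ᵀ * (1 - B * Bᵀ) = 1 - B * Bᵀ := by
    have hBBB : B * Bᵀ * (B * Bᵀ) = B * Bᵀ := by
      rw [Matrix.mul_assoc, ← Matrix.mul_assoc Bᵀ, hB, Matrix.one_mul]
    simp only [transpose_sub, transpose_one, transpose_mul, transpose_transpose,
      Matrix.sub_mul, Matrix.mul_sub, Matrix.one_mul, Matrix.mul_one, hBBB, sub_self, sub_zero]
  rw [← hQ, ← conjTranspose_eq_transpose_of_trivial]
  exact posSemidef_conjTranspose_mul_self _

lemma trace_transpose_mul_self_transpose_mul_le {B : Matrix ι κ ℝ} (hB : Bᵀ * B = 1)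
    (Y : Matrix ι μ ℝ) : ((Bᵀ * Y)ᵀ * (Bᵀ * Y)).trace ≤ (Yᵀ * Y).trace := by
  have hgap : 0 ≤ (Yᵀ * (1 - B * Bᵀ) * Y).trace := by
    rw [← conjTranspose_eq_transpose_of_trivial]
    exact ((posSemidef_one_sub_mul_transpose_of_isometry hB).conjTranspose_mul_mul_same
      Y).trace_nonneg
  rw [Matrix.mul_sub, Matrix.sub_mul, trace_sub, Matrix.mul_one] at hgap
  rw [transpose_mul, transpose_transpose]
  simp only [Matrix.mul_assoc] at hgap ⊢
  linarith

lemma trace_transpose_mul_self_mul_le {B : Matrix ι κ ℝ} (hB : Bᵀ * B = 1)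
    (Y : Matrix μ ι ℝ) : ((Y * B)ᵀ * (Y * B)).trace ≤ (Yᵀ * Y).trace := by
  calc ((Y * B)ᵀ * (Y * B)).trace = ((Bᵀ * Yᵀ)ᵀ * (Bᵀ * Yᵀ)).trace := by
        simp only [transpose_mul, transpose_transpose]
        exact trace_mul_comm _ _
    _ ≤ (Yᵀᵀ * Yᵀ).trace := trace_transpose_mul_self_transpose_mul_le hB Yᵀ
    _ = (Yᵀ * Y).trace := by rw [transpose_transpose, trace_mul_comm]

omit [DecidableEq ι] in
lemma transpose_mul_mul_self_eq_one_of_mul_self_eq_inv {N : Matrix ι κ ℝ}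
    (hN : Function.Injective N.mulVec) {R : Matrix κ κ ℝ} (hR : Rᵀ = R)
    (hRR : R * R = (Nᵀ * N)⁻¹) : (N * R)ᵀ * (N * R) = 1 := by
  have hunit : IsUnit (Nᵀ * N).det := by
    rw [← conjTranspose_eq_transpose_of_trivial, ← isUnit_iff_isUnit_det]
    exact (PosDef.conjTranspose_mul_self N hN).isUnit
  have hRRG : R * (R * (Nᵀ * N)) = 1 := by
    rw [← Matrix.mul_assoc, hRR, nonsing_inv_mul _ hunit]
  rw [transpose_mul, hR, Matrix.mul_assoc, ← Matrix.mul_assoc Nᵀ, ← Matrix.mul_assoc]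
  exact mul_eq_one_comm.mp hRRG

end Isometry

lemma frobNorm_eq_sqrt_trace {p q : ℕ} (M : Matrix (Fin p) (Fin q) ℝ) :
    frobNorm M = √(Mᵀ * M).trace := by
  rw [frobNorm, Finset.sum_comm]
  simp [trace, mul_apply, sq]

lemma frobNorm_transpose_mul_mul_le {p q : ℕ} {B : Matrix (Fin p) (Fin q) ℝ} (hB : Bᵀ * B = 1)
    (W : Matrix (Fin p) (Fin p) ℝ) : frobNorm (Bᵀ * W * B) ≤ frobNorm W := by
  rw [frobNorm_eq_sqrt_trace, frobNorm_eq_sqrt_trace]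
  gcongr
  exact (trace_transpose_mul_self_mul_le hB _).trans
    (trace_transpose_mul_self_transpose_mul_le hB W)

lemma frobNorm_diagonal {p : ℕ} (w : Fin p → ℝ) : frobNorm (diagonal w) = √(w ⬝ᵥ w) := by
  rw [frobNorm_eq_sqrt_trace, diagonal_transpose, diagonal_mul_diagonal, trace_diagonal]
  rfl

lemma locNorm_transpose_mul_self {p q : ℕ} (N : Matrix (Fin p) (Fin q) ℝ) (h : Fin q → ℝ) :
    locNorm (Nᵀ * N) h = √((N *ᵥ h) ⬝ᵥ (N *ᵥ h)) := by
  rw [locNorm, ← mulVec_mulVec, dotProduct_mulVec, vecMul_transpose]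

section DiagonalWeights

variable {ι κ : Type*} [Fintype ι] [DecidableEq ι]

lemma transpose_diagonal_mul_mul_diagonal_mul (A : Matrix ι κ ℝ) (c w : ι → ℝ) :
    (diagonal c * A)ᵀ * diagonal w * (diagonal c * A) = Aᵀ * diagonal (c * w * c) * A := by
  rw [transpose_mul, diagonal_transpose]
  simp only [Matrix.mul_assoc, ← Matrix.mul_assoc (diagonal _), diagonal_mul_diagonal]
  rfl

lemma transpose_mul_diagonal_mul_apply (A : Matrix ι κ ℝ) (d : ι → ℝ) (i j : κ) :
    (Aᵀ * diagonal d * A) i j = ∑ k, A k i * d k * A k j := by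
  rw [mul_apply]
  simp only [mul_diagonal, transpose_apply]

lemma hasDerivAt_transpose_mul_diagonal_mul_apply (A : Matrix ι κ ℝ) {d : ℝ → ι → ℝ}
    {d' : ι → ℝ} {t : ℝ} (hd : ∀ k, HasDerivAt (fun t => d t k) (d' k) t) (i j : κ) :
    HasDerivAt (fun t => (Aᵀ * diagonal (d t) * A) i j) ((Aᵀ * diagonal d' * A) i j) t := by
  simp only [transpose_mul_diagonal_mul_apply]
  exact HasDerivAt.fun_sum fun k _ => ((hd k).const_mul (A k i)).mul_const (A k j)

end DiagonalWeights

lemma hasDerivAt_inv_sq_add_mul {s : ℝ} (hs : s ≠ 0) (v : ℝ) :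
    HasDerivAt (fun t : ℝ => ((s + t * v) ^ 2)⁻¹) (-2 * v / s ^ 3) 0 := by
  have hline : HasDerivAt (fun t : ℝ => s + t * v) v 0 := by
    simpa using ((hasDerivAt_id' (0 : ℝ)).mul_const v).const_add s
  refine ((hline.fun_pow 2).fun_inv (by simpa using pow_ne_zero 2 hs)).congr_deriv ?_
  simp only [zero_mul, add_zero]
  field_simp
  ring

section LogBarrier

variable {ι κ : Type*} [Fintype ι] [DecidableEq ι] [Fintype κ]

noncomputable def slackScaledMatrix (A : Matrix ι κ ℝ) (b : ι → ℝ) (x : κ → ℝ) : Matrix ι κ ℝ :=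
  diagonal (A *ᵥ x - b)⁻¹ * A

lemma hessian_eq_slackScaledMatrix (A : Matrix ι κ ℝ) (b : ι → ℝ) (x : κ → ℝ) :
    Aᵀ * diagonal (fun i => ((A *ᵥ x - b) i ^ 2)⁻¹) * A
      = (slackScaledMatrix A b x)ᵀ * slackScaledMatrix A b x := by
  rw [slackScaledMatrix, ← Matrix.mul_one (diagonal _ * A)ᵀ, ← diagonal_one,
    transpose_diagonal_mul_mul_diagonal_mul]
  congr 3
  funext i
  simp [sq]

lemma mulVec_slackScaledMatrix (A : Matrix ι κ ℝ) (b : ι → ℝ) (x h : κ → ℝ) :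
    slackScaledMatrix A b x *ᵥ h = (A *ᵥ x - b)⁻¹ * A *ᵥ h := by
  ext k
  rw [slackScaledMatrix, ← mulVec_mulVec, mulVec_diagonal]
  rfl

lemma injective_mulVec_slackScaledMatrix {A : Matrix ι κ ℝ} (hA : Function.Injective A.mulVec)
    {b : ι → ℝ} {x : κ → ℝ} (hx : ∀ i, (A *ᵥ x - b) i ≠ 0) :
    Function.Injective (slackScaledMatrix A b x).mulVec := by
  intro y z hyz
  refine hA (funext fun k => ?_)
  have hk := congrFun hyz k
  rw [mulVec_slackScaledMatrix, mulVec_slackScaledMatrix] at hk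
  exact (mul_right_inj' (inv_ne_zero (hx k))).mp hk

lemma hasDerivAt_hessian_apply (A : Matrix ι κ ℝ) (b : ι → ℝ) {x : κ → ℝ}
    (hx : ∀ i, (A *ᵥ x - b) i ≠ 0) (h : κ → ℝ) (i j : κ) :
    HasDerivAt (fun t : ℝ => (Aᵀ * diagonal (fun k => ((A *ᵥ (x + t • h) - b) k ^ 2)⁻¹) * A) i j)
      (((slackScaledMatrix A b x)ᵀ * diagonal ((-2 : ℝ) • (slackScaledMatrix A b x *ᵥ h))
        * slackScaledMatrix A b x) i j) 0 := by
  have hslack : ∀ (t : ℝ) k, (A *ᵥ (x + t • h) - b) k = (A *ᵥ x - b) k + t * (A *ᵥ h) k := by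
    intro t k
    simp only [mulVec_add, mulVec_smul, Pi.sub_apply, Pi.add_apply, Pi.smul_apply, smul_eq_mul]
    ring
  simp only [hslack]
  rw [slackScaledMatrix, transpose_diagonal_mul_mul_diagonal_mul, ← slackScaledMatrix,
    mulVec_slackScaledMatrix]
  convert hasDerivAt_transpose_mul_diagonal_mul_apply A
    (fun k => hasDerivAt_inv_sq_add_mul (hx k) ((A *ᵥ h) k)) i j using 4
  funext k
  have hk := hx k
  simp only [Pi.mul_apply, Pi.smul_apply, Pi.inv_apply, smul_eq_mul]
  field_simp

end LogBarrier

theorem stmt_7 {m n : ℕ} (A : Matrix (Fin m) (Fin n) ℝ) (b : Fin m → ℝ)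
    -- A has full column rank
    (hrank : ∀ z : Fin n → ℝ, A.mulVec z = 0 → z = 0)
    -- H is the Hessian of the log barrier: H(x) = Aᵀ S_x⁻² A
    (H : (Fin n → ℝ) → Matrix (Fin n) (Fin n) ℝ)
    (hH : ∀ x, H x = Aᵀ * Matrix.diagonal (fun i => (((A.mulVec x - b) i) ^ 2)⁻¹) * A)
    (x : Fin n → ℝ) (hx : ∀ i, b i < A.mulVec x i)
    (h : Fin n → ℝ)
    -- DH = DH(x)[h], the directional derivative of H at x in direction h
    (DH : Matrix (Fin n) (Fin n) ℝ)
    (hDH : ∀ i j, HasDerivAt (fun t : ℝ => H (x + t • h) i j) (DH i j) 0)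
    -- R is H(x)^{-1/2}
    (R : Matrix (Fin n) (Fin n) ℝ)
    (hRpsd : R.PosSemidef) (hRR : R * R = (H x)⁻¹) :
    frobNorm (R * DH * R) ≤ 2 * locNorm (H x) h := by
  set N := slackScaledMatrix A b x
  set W := diagonal ((-2 : ℝ) • (N *ᵥ h))
  have hslack : ∀ i, (A *ᵥ x - b) i ≠ 0 := fun i => (sub_pos.mpr (hx i)).ne'
  have hHx : H x = Nᵀ * N := (hH x).trans (hessian_eq_slackScaledMatrix A b x)
  have hDHx : DH = Nᵀ * W * N := by
    ext i j
    refine (hDH i j).unique ?_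
    simpa only [hH] using hasDerivAt_hessian_apply A b hslack h i j
  have hR : Rᵀ = R := hRpsd.isHermitian
  have hA : Function.Injective A.mulVec :=
    LinearMap.ker_eq_bot.mp (ker_mulVecLin_eq_bot_iff.mpr hrank)
  have hNR : (N * R)ᵀ * (N * R) = 1 :=
    transpose_mul_mul_self_eq_one_of_mul_self_eq_inv
      (injective_mulVec_slackScaledMatrix hA hslack) hR (hHx ▸ hRR)
  calc frobNorm (R * DH * R) = frobNorm ((N * R)ᵀ * W * (N * R)) := by
        rw [hDHx, transpose_mul, hR]
        simp only [Matrix.mul_assoc]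
    _ ≤ frobNorm W := frobNorm_transpose_mul_mul_le hNR W
    _ = 2 * locNorm (H x) h := by
        rw [frobNorm_diagonal, hHx, locNorm_transpose_mul_self, smul_dotProduct, dotProduct_smul,
          smul_eq_mul, smul_eq_mul, ← mul_assoc, show (-2 : ℝ) * -2 = 2 ^ 2 by norm_num,
          Real.sqrt_mul (by norm_num), Real.sqrt_sq (by norm_num)]
end

section
/- For an orthogonal projection matrix P ∈ ℝ^{m×m} (P² = P = Pᵀ) with leverage scores σ_i = P_{ii}, the Hadamard square satisfies P∘P ⪯ Diag(σ), where (P∘P)_{ij} = P_{ij}². Consequently, for any vector u ∈ ℝ^m, tr(P Diag(u) P Diag(u)) = uᵀ(P∘P)u ≤ ∑_i σ_i u_i². -/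
open Matrix

/-!
An orthogonal projection `P` and its complement `1 - P` are both positive semidefinite, so by the
Schur product theorem so is `(1 - P) ⊙ P = diagonal P.diag - P ⊙ P`; the inequality is the
nonnegativity of its quadratic form.
-/

variable {n : Type*} [Fintype n] [DecidableEq n]

section StarProjection

open scoped MatrixOrder ComplexOrder

theorem IsStarProjection.posSemidef_diagonal_diag_sub_hadamard_self {𝕜 : Type*} [RCLike 𝕜]
    {P : Matrix n n 𝕜} (hP : IsStarProjection P) : (diagonal P.diag - P ⊙ P).PosSemidef := by
  have h : (1 - P) ⊙ P = diagonal P.diag - P ⊙ P := by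
    rw [← one_hadamard]
    ext i j
    simp only [Matrix.sub_apply, hadamard_apply, sub_mul]
  exact h ▸ hP.one_sub.nonneg.posSemidef.hadamard hP.nonneg.posSemidef

end StarProjection

namespace Matrix

theorem trace_mul_diagonal_mul_mul_diagonal {R : Type*} [CommSemiring R] (A B : Matrix n n R)
    (u : n → R) : (A * diagonal u * B * diagonal u).trace = u ⬝ᵥ (A ⊙ Bᵀ) *ᵥ u := by
  simp only [trace, diag_apply, mul_apply, diagonal_apply, mul_ite, mul_zero, Finset.sum_ite_eq',
    Finset.mem_univ, if_true, dotProduct, mulVec, hadamard_apply, transpose_apply, Finset.mul_sum,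
    Finset.sum_mul]
  exact Finset.sum_congr rfl fun i _ => Finset.sum_congr rfl fun j _ => by ring

theorem PosSemidef.dotProduct_mulVec_le_sum_of_diagonal_sub {M : Matrix n n ℝ} {d : n → ℝ}
    (h : (diagonal d - M).PosSemidef) (u : n → ℝ) : u ⬝ᵥ M *ᵥ u ≤ ∑ i, d i * u i ^ 2 := by
  have hu := h.dotProduct_mulVec_nonneg u
  rw [star_trivial, sub_mulVec, dotProduct_sub, sub_nonneg] at hu
  refine hu.trans_eq (Finset.sum_congr rfl fun i _ => ?_)
  rw [mulVec_diagonal]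
  ring

end Matrix

theorem stmt_8 {m : ℕ} (P : Matrix (Fin m) (Fin m) ℝ)
    (hsym : P.IsSymm) (hidem : P * P = P) :
    (Matrix.diagonal (fun i => P i i) - Matrix.hadamard P P).PosSemidef ∧
    ∀ u : Fin m → ℝ,
      (P * Matrix.diagonal u * P * Matrix.diagonal u).trace
        = u ⬝ᵥ (Matrix.hadamard P P).mulVec u ∧
      u ⬝ᵥ (Matrix.hadamard P P).mulVec u ≤ ∑ i, P i i * u i ^ 2 := by
  have hP : IsStarProjection P :=
    ⟨hidem, by rwa [IsSelfAdjoint, star_eq_conjTranspose, conjTranspose_eq_transpose_of_trivial]⟩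
  have hpsd := hP.posSemidef_diagonal_diag_sub_hadamard_self
  refine ⟨hpsd, fun u => ⟨?_, hpsd.dotProduct_mulVec_le_sum_of_diagonal_sub u⟩⟩
  rw [trace_mul_diagonal_mul_mul_diagonal, hsym.eq]
end

section
/- For any symmetric matrix M ∈ ℝ^{n×n}, |tr(M)| ≤ √n · ‖M‖_F. Consequently, if H is a strongly self-concordant matrix function (‖H(x)^{-1/2}DH(x)[h]H(x)^{-1/2}‖_F ≤ 2‖h‖_x), then the function f(x) = log det H(x) satisfies ‖H(x)^{-1/2} ∇f(x)‖₂ ≤ 2√n for all x. -/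
open Matrix

/-!
With `A = H⁻¹ = R²` and `u = A g`, the defining identity of the gradient gives
`‖R g‖² = gᵀ A g = tr(R · DH[u] · R)`, and `u` has local norm `‖u‖_H = ‖R g‖`.
Bounding the trace by `√n` times the Frobenius norm and then by strong self-concordance yields
`‖R g‖² ≤ 2√n ‖R g‖`.
-/

lemma abs_trace_le_sqrt_mul_frobNorm {n : ℕ} (M : Matrix (Fin n) (Fin n) ℝ) :
    |M.trace| ≤ Real.sqrt n * frobNorm M := by
  have hdiag : M.trace ^ 2 ≤ n * ∑ i, M i i ^ 2 := by
    simpa [Matrix.trace] using sq_sum_le_card_mul_sum_sq (s := Finset.univ) (f := fun i => M i i)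
  have hdiag_le : ∑ i, M i i ^ 2 ≤ ∑ i, ∑ j, M i j ^ 2 :=
    Finset.sum_le_sum fun i _ =>
      Finset.single_le_sum (f := fun j => M i j ^ 2) (fun j _ => sq_nonneg _) (Finset.mem_univ i)
  calc |M.trace| = Real.sqrt (M.trace ^ 2) := (Real.sqrt_sq_eq_abs _).symm
    _ ≤ Real.sqrt (n * ∑ i, ∑ j, M i j ^ 2) :=
        Real.sqrt_le_sqrt (hdiag.trans (by gcongr))
    _ = Real.sqrt n * frobNorm M := Real.sqrt_mul (Nat.cast_nonneg n) _

section Gradient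

variable {n : ℕ} {H R : Matrix (Fin n) (Fin n) ℝ}

lemma sum_sq_mulVec_eq_dotProduct_mul_self_mulVec (hR : R.IsSymm) (g : Fin n → ℝ) :
    ∑ i, (R *ᵥ g) i ^ 2 = g ⬝ᵥ (R * R) *ᵥ g := by
  calc ∑ i, (R *ᵥ g) i ^ 2 = (R *ᵥ g) ⬝ᵥ (R *ᵥ g) := by simp only [dotProduct, sq]
    _ = g ⬝ᵥ (R * R) *ᵥ g := by
        rw [← mulVec_mulVec, dotProduct_comm, dotProduct_mulVec, ← mulVec_transpose, hR.eq, dotProduct_comm]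

lemma locNorm_nonsing_inv_mulVec (hH : IsUnit H.det) (g : Fin n → ℝ) :
    locNorm H (H⁻¹ *ᵥ g) = Real.sqrt (g ⬝ᵥ H⁻¹ *ᵥ g) := by
  rw [locNorm, mulVec_mulVec, mul_nonsing_inv H hH, one_mulVec, dotProduct_comm]

lemma dotProduct_mulVec_eq_trace_of_gradient {D : (Fin n → ℝ) → Matrix (Fin n) (Fin n) ℝ}
    (hRR : R * R = H⁻¹) {g : Fin n → ℝ} (hg : ∀ u, g ⬝ᵥ u = (H⁻¹ * D u).trace) :
    g ⬝ᵥ H⁻¹ *ᵥ g = (R * D (H⁻¹ *ᵥ g) * R).trace := by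
  rw [hg, ← hRR, mul_assoc, trace_mul_comm]

lemma le_of_sq_le_mul {t c : ℝ} (hc : 0 ≤ c) (h : t ^ 2 ≤ c * t) : t ≤ c := by
  nlinarith

theorem sqrt_sum_sq_mulVec_gradient_le {D : (Fin n → ℝ) → Matrix (Fin n) (Fin n) ℝ} {c : ℝ}
    (hc : 0 ≤ c) (hH : IsUnit H.det) (hR : R.IsSymm) (hRR : R * R = H⁻¹)
    (hD : ∀ h, frobNorm (R * D h * R) ≤ c * locNorm H h)
    {g : Fin n → ℝ} (hg : ∀ u, g ⬝ᵥ u = (H⁻¹ * D u).trace) :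
    Real.sqrt (∑ i, (R *ᵥ g) i ^ 2) ≤ c * Real.sqrt n := by
  set u := H⁻¹ *ᵥ g
  have hsum : ∑ i, (R *ᵥ g) i ^ 2 = g ⬝ᵥ u := by
    rw [sum_sq_mulVec_eq_dotProduct_mul_self_mulVec hR, hRR]
  have hu : locNorm H u = Real.sqrt (∑ i, (R *ᵥ g) i ^ 2) := by
    rw [locNorm_nonsing_inv_mulVec hH, hsum]
  apply le_of_sq_le_mul (by positivity)
  calc Real.sqrt (∑ i, (R *ᵥ g) i ^ 2) ^ 2 = (R * D u * R).trace := by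
        rw [Real.sq_sqrt (by positivity), hsum, dotProduct_mulVec_eq_trace_of_gradient hRR hg]
    _ ≤ |(R * D u * R).trace| := le_abs_self _
    _ ≤ Real.sqrt n * frobNorm (R * D u * R) := abs_trace_le_sqrt_mul_frobNorm _
    _ ≤ Real.sqrt n * (c * locNorm H u) := by gcongr; exact hD u
    _ = c * Real.sqrt n * Real.sqrt (∑ i, (R *ᵥ g) i ^ 2) := by rw [hu]; ring

end Gradient

theorem stmt_9_general {n : ℕ} (K : Set (Fin n → ℝ))
    (H : (Fin n → ℝ) → Matrix (Fin n) (Fin n) ℝ)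
    (DH : (Fin n → ℝ) → (Fin n → ℝ) → Matrix (Fin n) (Fin n) ℝ)
    (hpd : ∀ x ∈ K, (H x).PosDef)
    -- `R x` is the inverse square root `H(x)^{-1/2}`
    (R : (Fin n → ℝ) → Matrix (Fin n) (Fin n) ℝ)
    (hR : ∀ x ∈ K, (R x).PosSemidef ∧ R x * R x = (H x)⁻¹)
    -- strong self-concordance
    (hssc : ∀ x ∈ K, ∀ h : Fin n → ℝ,
      frobNorm (R x * DH x h * R x) ≤ 2 * locNorm (H x) h) :
    -- (a) trace vs Frobenius norm
    (∀ M : Matrix (Fin n) (Fin n) ℝ, M.IsSymm → |M.trace| ≤ Real.sqrt n * frobNorm M) ∧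
    -- (b) the gradient g of f(x) = log det H(x), with Df(x)[u] = tr(H(x)⁻¹ DH(x)[u]),
    --     satisfies ‖H(x)^{-1/2} g‖₂ ≤ 2√n
    (∀ x ∈ K, ∀ g : Fin n → ℝ,
      (∀ u : Fin n → ℝ, g ⬝ᵥ u = ((H x)⁻¹ * DH x u).trace) →
      Real.sqrt (∑ i, ((R x).mulVec g i) ^ 2) ≤ 2 * Real.sqrt n) := by
  refine ⟨fun M _ => abs_trace_le_sqrt_mul_frobNorm M, fun x hx g hg => ?_⟩
  obtain ⟨hRpsd, hRR⟩ := hR x hx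
  have hR_symm : (R x).IsSymm := isHermitian_iff_isSymm.mp hRpsd.isHermitian
  have hH_det : IsUnit (H x).det := (isUnit_iff_isUnit_det _).mp (hpd x hx).isUnit
  exact sqrt_sum_sq_mulVec_gradient_le zero_le_two hH_det hR_symm hRR (hssc x hx) hg

theorem stmt_9 {n : ℕ} (K : Set (Fin n → ℝ)) (hK : Convex ℝ K)
    (H : (Fin n → ℝ) → Matrix (Fin n) (Fin n) ℝ)
    (DH : (Fin n → ℝ) → (Fin n → ℝ) → Matrix (Fin n) (Fin n) ℝ)
    (hpd : ∀ x ∈ K, (H x).PosDef)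
    (hlin : ∀ x ∈ K, IsLinearMap ℝ (DH x))
    -- `R x` is the inverse square root `H(x)^{-1/2}`
    (R : (Fin n → ℝ) → Matrix (Fin n) (Fin n) ℝ)
    (hR : ∀ x ∈ K, (R x).PosSemidef ∧ R x * R x = (H x)⁻¹)
    -- strong self-concordance
    (hssc : ∀ x ∈ K, ∀ h : Fin n → ℝ,
      frobNorm (R x * DH x h * R x) ≤ 2 * locNorm (H x) h) :
    -- (a) trace vs Frobenius norm
    (∀ M : Matrix (Fin n) (Fin n) ℝ, M.IsSymm → |M.trace| ≤ Real.sqrt n * frobNorm M) ∧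
    -- (b) the gradient g of f(x) = log det H(x), with Df(x)[u] = tr(H(x)⁻¹ DH(x)[u]),
    --     satisfies ‖H(x)^{-1/2} g‖₂ ≤ 2√n
    (∀ x ∈ K, ∀ g : Fin n → ℝ,
      (∀ u : Fin n → ℝ, g ⬝ᵥ u = ((H x)⁻¹ * DH x u).trace) →
      Real.sqrt (∑ i, ((R x).mulVec g i) ^ 2) ≤ 2 * Real.sqrt n) :=
  stmt_9_general K H DH hpd R hR hssc
end

section
/- Let λ_1,…,λ_n > 0 satisfy ∑_i (λ_i − 1)² ≤ (1/(256√n))² ≤ 1/256². Then (a) ∏_{i : λ_i < 1} λ_i ≥ e^{-1/128}, and (b) ∏_{i : λ_i > 1} λ_i ≤ e^{1/256}. In particular, the ratio of the volume of the ellipsoid with semi-axes min(√λ_i, 1) to the volume of the unit ball is at least e^{-1/256}, and to the volume of the ellipsoid with semi-axes √λ_i is at least e^{-1/512}. -/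
/-!
By Cauchy–Schwarz, `∑ |λᵢ - 1| ≤ √n · (∑ (λᵢ - 1)²)^{1/2} ≤ 1/256` over any set of indices.
On the indices with `λᵢ < 1` each factor satisfies `λᵢ ≥ e^{-2(1 - λᵢ)}`, and every factor
satisfies `λᵢ ≤ e^{λᵢ - 1}`; multiplying gives (a) and (b). The volume ratios are square roots
of such products: `∏ min(√λᵢ, 1)` only sees the indices with `λᵢ < 1`, and dividing it by
`∏ √λᵢ` leaves the reciprocal of the square root of the product over the others.
-/

open Finset Real

lemma Real.exp_neg_two_mul_le_one_sub {x : ℝ} (h₀ : 0 ≤ x) (h₁ : x ≤ 1 / 2) :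
    exp (-(2 * x)) ≤ 1 - x := by
  rw [exp_neg, inv_le_iff_one_le_mul₀ (exp_pos _)]
  calc 1 ≤ (1 - x) * (2 * x + 1) := by nlinarith
    _ ≤ (1 - x) * exp (2 * x) := by gcongr; linarith; exact add_one_le_exp _

lemma Finset.sum_abs_le_of_sum_sq_le {ι : Type*} [Fintype ι] {f : ι → ℝ} {c : ℝ} (hc : 0 ≤ c)
    (h : ∑ i, f i ^ 2 ≤ (c / √(Fintype.card ι)) ^ 2) (s : Finset ι) :
    ∑ i ∈ s, |f i| ≤ c := by
  have hsub : ∑ i ∈ s, |f i| ≤ ∑ i, |f i| :=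
    sum_le_sum_of_subset_of_nonneg (subset_univ s) fun i _ _ => abs_nonneg _
  have hcs : (∑ i, |f i|) ^ 2 ≤ c ^ 2 :=
    calc (∑ i, |f i|) ^ 2 ≤ Fintype.card ι * ∑ i, f i ^ 2 := by
          simpa only [sq_abs, card_univ] using sq_sum_le_card_mul_sum_sq (s := univ) (f := fun i => |f i|)
      _ ≤ Fintype.card ι * (c / √(Fintype.card ι)) ^ 2 := by gcongr
      _ ≤ c ^ 2 := by
          rw [div_pow, sq_sqrt (Nat.cast_nonneg _), mul_div_left_comm]
          exact mul_le_of_le_one_right (sq_nonneg c) (div_self_le_one _)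
  exact hsub.trans (le_of_sq_le_sq hcs hc)

lemma Finset.exp_neg_two_mul_sum_one_sub_le_prod {ι : Type*} {s : Finset ι} {x : ι → ℝ}
    (h₀ : ∀ i ∈ s, 1 / 2 ≤ x i) (h₁ : ∀ i ∈ s, x i ≤ 1) :
    exp (-(2 * ∑ i ∈ s, (1 - x i))) ≤ ∏ i ∈ s, x i := by
  rw [mul_sum, ← sum_neg_distrib, exp_sum]
  refine prod_le_prod (fun i _ => (exp_pos _).le) fun i hi => ?_
  simpa using exp_neg_two_mul_le_one_sub (x := 1 - x i) (by linarith [h₁ i hi])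
    (by linarith [h₀ i hi])

lemma Finset.prod_le_exp_sum_abs_sub_one {ι : Type*} {s : Finset ι} {x : ι → ℝ}
    (hx : ∀ i ∈ s, 0 ≤ x i) : ∏ i ∈ s, x i ≤ exp (∑ i ∈ s, |x i - 1|) := by
  rw [exp_sum]
  refine prod_le_prod hx fun i _ => ?_
  linarith [add_one_le_exp (x i - 1), exp_le_exp.2 (le_abs_self (x i - 1))]

lemma Finset.prod_min_sqrt_one {ι : Type*} (s : Finset ι) (x : ι → ℝ) :
    ∏ i ∈ s, min √(x i) 1 = ∏ i ∈ s with x i < 1, √(x i) := by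
  rw [← prod_filter_mul_prod_filter_not s (fun i => x i < 1)]
  rw [prod_congr rfl fun i hi => min_eq_left (sqrt_le_one.2 (mem_filter.1 hi).2.le),
    prod_congr rfl fun i hi => min_eq_right (one_le_sqrt.2 (not_lt.1 (mem_filter.1 hi).2)),
    prod_const_one, mul_one]

lemma Finset.prod_min_sqrt_one_div_prod_sqrt {ι : Type*} {s : Finset ι} {x : ι → ℝ}
    (hx : ∀ i ∈ s, 0 < x i) :
    (∏ i ∈ s, min √(x i) 1) / ∏ i ∈ s, √(x i) = (∏ i ∈ s with ¬x i < 1, √(x i))⁻¹ := by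
  have hpos : 0 < ∏ i ∈ s with x i < 1, √(x i) :=
    prod_pos fun i hi => sqrt_pos.2 (hx i (mem_filter.1 hi).1)
  rw [prod_min_sqrt_one, ← prod_filter_mul_prod_filter_not s (fun i => x i < 1),
    div_mul_cancel_left₀ hpos.ne']

theorem stmt_10_general {n : ℕ} (lam : Fin n → ℝ) (hpos : ∀ i, 0 < lam i)
    (hsum : ∑ i, (lam i - 1) ^ 2 ≤ (1 / (256 * Real.sqrt n)) ^ 2) :
    (∏ i ∈ Finset.univ.filter (fun i => lam i < 1), lam i) ≥ Real.exp (-(1 / 128)) ∧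
    (∏ i ∈ Finset.univ.filter (fun i => 1 < lam i), lam i) ≤ Real.exp (1 / 256) ∧
    (∏ i, min (Real.sqrt (lam i)) 1) ≥ Real.exp (-(1 / 256)) ∧
    (∏ i, min (Real.sqrt (lam i)) 1) / (∏ i, Real.sqrt (lam i)) ≥ Real.exp (-(1 / 512)) := by
  have hdev (s : Finset (Fin n)) : ∑ i ∈ s, |lam i - 1| ≤ 1 / 256 :=
    sum_abs_le_of_sum_sq_le (by norm_num) (by rwa [Fintype.card_fin, div_div]) s
  have hsqrt (s : Finset (Fin n)) : ∏ i ∈ s, √(lam i) = √(∏ i ∈ s, lam i) :=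
    (sqrt_prod s fun i _ => (hpos i).le).symm
  have hsmall : exp (-(1 / 128)) ≤ ∏ i with lam i < 1, lam i := by
    have hnear (i : Fin n) : |lam i - 1| ≤ 1 / 256 := by simpa using hdev {i}
    have hgap : ∑ i with lam i < 1, (1 - lam i) ≤ 1 / 256 :=
      (sum_le_sum fun i _ => abs_sub_comm (lam i) 1 ▸ le_abs_self _).trans (hdev _)
    exact (exp_le_exp.2 (by linarith)).trans (exp_neg_two_mul_sum_one_sub_le_prod
      (fun i _ => by linarith [(abs_le.1 (hnear i)).1]) fun i hi => (mem_filter.1 hi).2.le)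
  have hlarge (s : Finset (Fin n)) : ∏ i ∈ s, lam i ≤ exp (1 / 256) :=
    (prod_le_exp_sum_abs_sub_one fun i _ => (hpos i).le).trans (exp_le_exp.2 (hdev s))
  refine ⟨hsmall, hlarge _, ?_, ?_⟩
  · rw [prod_min_sqrt_one, hsqrt, ge_iff_le, show (-(1 / 256) : ℝ) = -(1 / 128) / 2 by norm_num,
      exp_half]
    exact sqrt_le_sqrt hsmall
  · rw [prod_min_sqrt_one_div_prod_sqrt fun i _ => hpos i, hsqrt, ge_iff_le,
      show (-(1 / 512) : ℝ) = -(1 / 256 / 2) by norm_num, exp_neg, exp_half]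
    exact inv_anti₀ (sqrt_pos.2 (prod_pos fun i _ => hpos i)) (sqrt_le_sqrt (hlarge _))

theorem stmt_10 {n : ℕ} (lam : Fin n → ℝ) (hpos : ∀ i, 0 < lam i)
    (hsum : ∑ i, (lam i - 1) ^ 2 ≤ (1 / (256 * Real.sqrt n)) ^ 2)
    (hb : (1 / (256 * Real.sqrt n)) ^ 2 ≤ 1 / 256 ^ 2) :
    (∏ i ∈ Finset.univ.filter (fun i => lam i < 1), lam i) ≥ Real.exp (-(1 / 128)) ∧
    (∏ i ∈ Finset.univ.filter (fun i => 1 < lam i), lam i) ≤ Real.exp (1 / 256) ∧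
    (∏ i, min (Real.sqrt (lam i)) 1) ≥ Real.exp (-(1 / 256)) ∧
    (∏ i, min (Real.sqrt (lam i)) 1) / (∏ i, Real.sqrt (lam i)) ≥ Real.exp (-(1 / 512)) :=
  stmt_10_general lam hpos hsum
end

section
/- Let A ∈ ℝ^{m×n}, x in the interior of the polytope P = {y : Ay > b}, and let w ∈ ℝ^m with 0 ≤ w_i ≤ 1 for all i and ∑_i w_i = n. Let q = 2(1 + ln m) ≥ 2 and H = A_xᵀ W^{1−2/q} A_x where A_x = Diag(Ax−b)^{-1}A and W = Diag(w). Then for any y ∈ P ∩ (2x − P), (x−y)ᵀ H (x−y) ≤ ∑_{i=1}^m w_i^{1−2/q} ≤ n^{1−2/q} m^{2/q} ≤ e·n. -/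
/-!
For `y ∈ P ∩ (2x - P)` every coordinate of `A(x - y)` is smaller in absolute value than the
corresponding slack of `Ax - b`, so each row of `A_x (x - y)` lies in `[-1, 1]` and the quadratic
form is at most `∑ wᵢ^{1-2/q}`. The second bound is Jensen's inequality for the concave map
`t ↦ t^{1-2/q}`, and the third holds because `m^{2/q} = exp (log m / (1 + log m)) ≤ e`.
-/

open Matrix

section QuadraticForm

variable {R ι κ : Type*} [Fintype ι] [DecidableEq ι] [Fintype κ]

theorem dotProduct_transpose_mul_diagonal_mul_mulVec [CommSemiring R]
    (B : Matrix ι κ R) (d : ι → R) (v : κ → R) :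
    v ⬝ᵥ (Bᵀ * diagonal d * B) *ᵥ v = ∑ i, d i * (B *ᵥ v) i ^ 2 := by
  rw [← mulVec_mulVec, ← mulVec_mulVec, dotProduct_mulVec, vecMul_transpose, dotProduct]
  refine Finset.sum_congr rfl fun i _ => ?_
  rw [mulVec_diagonal]
  ring

theorem dotProduct_transpose_mul_diagonal_mul_mulVec_le [CommRing R] [LinearOrder R]
    [IsStrictOrderedRing R] {B : Matrix ι κ R} {d : ι → R} {v : κ → R}
    (hd : ∀ i, 0 ≤ d i) (hBv : ∀ i, |(B *ᵥ v) i| ≤ 1) :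
    v ⬝ᵥ (Bᵀ * diagonal d * B) *ᵥ v ≤ ∑ i, d i := by
  rw [dotProduct_transpose_mul_diagonal_mul_mulVec]
  refine Finset.sum_le_sum fun i _ => ?_
  have hsq : (B *ᵥ v) i ^ 2 ≤ 1 := by
    rw [sq_le_one_iff_abs_le_one]
    exact hBv i
  simpa using mul_le_mul_of_nonneg_left hsq (hd i)

end QuadraticForm

section Symmetrization

variable {R ι κ : Type*} [Fintype κ] {A : Matrix ι κ R} {b : ι → R} {x y : κ → R}

theorem abs_mulVec_sub_lt_of_mem_reflection [CommRing R] [LinearOrder R]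
    [IsStrictOrderedRing R] (hy : ∀ i, b i < (A *ᵥ y) i)
    (hy2 : ∀ i, b i < (A *ᵥ ((2 : R) • x - y)) i) (i : ι) :
    |(A *ᵥ (x - y)) i| < (A *ᵥ x - b) i := by
  have hy2i := hy2 i
  have hyi := hy i
  simp only [mulVec_sub, mulVec_smul, Pi.sub_apply, Pi.smul_apply, smul_eq_mul] at hy2i ⊢
  rw [abs_lt]
  constructor <;> linarith

theorem abs_slack_scaled_mulVec_sub_le_one [Field R] [LinearOrder R] [IsStrictOrderedRing R]
    [Fintype ι] [DecidableEq ι] (hy : ∀ i, b i < (A *ᵥ y) i)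
    (hy2 : ∀ i, b i < (A *ᵥ ((2 : R) • x - y)) i) (i : ι) :
    |(((diagonal fun j => ((A *ᵥ x - b) j)⁻¹) * A) *ᵥ (x - y)) i| ≤ 1 := by
  have hlt := abs_mulVec_sub_lt_of_mem_reflection hy hy2 i
  have hslack : 0 < (A *ᵥ x - b) i := (abs_nonneg _).trans_lt hlt
  rw [← mulVec_mulVec, mulVec_diagonal, abs_mul, abs_inv, abs_of_pos hslack,
    inv_mul_le_one₀ hslack]
  exact hlt.le

end Symmetrization

namespace Real

theorem sum_rpow_le_rpow_sum_mul_card_rpow {ι : Type*} [Fintype ι] {w : ι → ℝ}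
    (hw : ∀ i, 0 ≤ w i) {p : ℝ} (hp0 : 0 ≤ p) (hp1 : p ≤ 1) :
    ∑ i, w i ^ p ≤ (∑ i, w i) ^ p * (Fintype.card ι : ℝ) ^ (1 - p) := by
  rcases isEmpty_or_nonempty ι with hι | hι
  · simp only [Finset.univ_eq_empty, Finset.sum_empty]
    positivity
  set N : ℝ := (Fintype.card ι : ℝ)
  have hN : 0 < N := Nat.cast_pos.mpr Fintype.card_pos
  have jensen := (concaveOn_rpow hp0 hp1).le_map_sum (t := Finset.univ) (w := fun _ => N⁻¹)
    (p := w) (fun _ _ => by positivity)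
    (by simp [Finset.sum_const, N, hN.ne']) (fun i _ => hw i)
  simp only [smul_eq_mul, ← Finset.mul_sum] at jensen
  rw [mul_rpow (inv_nonneg.mpr hN.le) (Finset.sum_nonneg fun i _ => hw i),
    ← le_div_iff₀' (inv_pos.mpr hN)] at jensen
  calc ∑ i, w i ^ p ≤ N⁻¹ ^ p * (∑ i, w i) ^ p / N⁻¹ := jensen
    _ = (∑ i, w i) ^ p * N ^ (1 - p) := by
      rw [inv_rpow hN.le, rpow_sub hN, rpow_one]
      field_simp

theorem rpow_inv_one_add_log_le_exp_one {x : ℝ} (hx : 1 ≤ x) :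
    x ^ (1 + log x)⁻¹ ≤ exp 1 := by
  have hlog : 0 ≤ log x := log_nonneg hx
  rw [rpow_def_of_pos (zero_lt_one.trans_le hx), exp_le_exp, ← div_eq_mul_inv,
    div_le_one (by linarith)]
  linarith

end Real

theorem stmt_12_general {m n : ℕ} (hm : 1 ≤ m) (hn : 1 ≤ n)
    (A : Matrix (Fin m) (Fin n) ℝ) (b : Fin m → ℝ)
    (x : Fin n → ℝ)
    (w : Fin m → ℝ) (hw0 : ∀ i, 0 ≤ w i)
    (hwsum : ∑ i, w i = (n : ℝ))
    (q : ℝ) (hq : q = 2 * (1 + Real.log m))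
    -- H = A_xᵀ W^{1-2/q} A_x with A_x = Diag(Ax-b)⁻¹ A
    (H : Matrix (Fin n) (Fin n) ℝ)
    (hH : H = (Matrix.diagonal (fun i => ((A.mulVec x - b) i)⁻¹) * A)ᵀ *
        Matrix.diagonal (fun i => w i ^ (1 - 2 / q)) *
        (Matrix.diagonal (fun i => ((A.mulVec x - b) i)⁻¹) * A))
    -- y ∈ P ∩ (2x − P)
    (y : Fin n → ℝ) (hy : ∀ i, b i < A.mulVec y i)
    (hy2 : ∀ i, b i < A.mulVec ((2 : ℝ) • x - y) i) :
    (x - y) ⬝ᵥ H.mulVec (x - y) ≤ ∑ i, w i ^ (1 - 2 / q) ∧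
    ∑ i, w i ^ (1 - 2 / q) ≤ (n : ℝ) ^ (1 - 2 / q) * (m : ℝ) ^ (2 / q) ∧
    (n : ℝ) ^ (1 - 2 / q) * (m : ℝ) ^ (2 / q) ≤ Real.exp 1 * n := by
  have hm1 : (1 : ℝ) ≤ m := Nat.one_le_cast.mpr hm
  have hlog : 0 ≤ Real.log m := Real.log_nonneg hm1
  have h2q : 2 / q = (1 + Real.log m)⁻¹ := by
    rw [hq]
    field_simp
  have hα0 : 0 ≤ 1 - 2 / q := by
    rw [h2q, sub_nonneg]
    exact inv_le_one_of_one_le₀ (by linarith)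
  have hα1 : 1 - 2 / q ≤ 1 := by
    rw [h2q, sub_le_self_iff]
    positivity
  refine ⟨?_, ?_, ?_⟩
  · rw [hH]
    exact dotProduct_transpose_mul_diagonal_mul_mulVec_le
      (fun i => Real.rpow_nonneg (hw0 i) _) (abs_slack_scaled_mulVec_sub_le_one hy hy2)
  · simpa [hwsum] using Real.sum_rpow_le_rpow_sum_mul_card_rpow hw0 hα0 hα1
  · calc (n : ℝ) ^ (1 - 2 / q) * (m : ℝ) ^ (2 / q) ≤ n * Real.exp 1 :=
          mul_le_mul (Real.rpow_le_self_of_one_le (Nat.one_le_cast.mpr hn) hα1)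
            (h2q ▸ Real.rpow_inv_one_add_log_le_exp_one hm1) (by positivity) (by positivity)
      _ = Real.exp 1 * n := mul_comm _ _

theorem stmt_12 {m n : ℕ} (hm : 1 ≤ m) (hn : 1 ≤ n)
    (A : Matrix (Fin m) (Fin n) ℝ) (b : Fin m → ℝ)
    (x : Fin n → ℝ) (hx : ∀ i, b i < A.mulVec x i)
    (w : Fin m → ℝ) (hw0 : ∀ i, 0 ≤ w i) (hw1 : ∀ i, w i ≤ 1)
    (hwsum : ∑ i, w i = (n : ℝ))
    (q : ℝ) (hq : q = 2 * (1 + Real.log m))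
    -- H = A_xᵀ W^{1-2/q} A_x with A_x = Diag(Ax-b)⁻¹ A
    (H : Matrix (Fin n) (Fin n) ℝ)
    (hH : H = (Matrix.diagonal (fun i => ((A.mulVec x - b) i)⁻¹) * A)ᵀ *
        Matrix.diagonal (fun i => w i ^ (1 - 2 / q)) *
        (Matrix.diagonal (fun i => ((A.mulVec x - b) i)⁻¹) * A))
    -- y ∈ P ∩ (2x − P)
    (y : Fin n → ℝ) (hy : ∀ i, b i < A.mulVec y i)
    (hy2 : ∀ i, b i < A.mulVec ((2 : ℝ) • x - y) i) :
    (x - y) ⬝ᵥ H.mulVec (x - y) ≤ ∑ i, w i ^ (1 - 2 / q) ∧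
    ∑ i, w i ^ (1 - 2 / q) ≤ (n : ℝ) ^ (1 - 2 / q) * (m : ℝ) ^ (2 / q) ∧
    (n : ℝ) ^ (1 - 2 / q) * (m : ℝ) ^ (2 / q) ≤ Real.exp 1 * n :=
  stmt_12_general hm hn A b x w hw0 hwsum q hq H hH y hy hy2
end

section
/- Let p be an isotropic probability distribution on ℝⁿ (mean zero, identity covariance) such that for every unit vector v, ‖E_{x∼p}[xxᵀ(xᵀv)]‖_F ≤ C. Then the log-partition function f(θ) = log∫exp(θᵀx)dp₀(x) of the corresponding exponential family, where after normalization H(θ) = ∇²f(θ), satisfies ‖∇²f(θ)^{-1/2} D³f(θ)[h] ∇²f(θ)^{-1/2}‖_F ≤ C·‖∇²f(θ)^{-1/2}h‖₂, where D³f(θ)[h] is the matrix (h₁,h₂) ↦ D³f(θ)[h₁,h₂,h]. -/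
/-!
Write `y = x - μ` and `T(h) = E[y yᵀ (yᵀh)]`. The normalized vector `x̃ = R y` has third-moment
matrix `E[x̃ x̃ᵀ (x̃ᵀw)] = R T(Rw) R`, which is homogeneous in `w`, so the unit-vector bound
gives `‖R T(Rw) R‖_F ≤ C |w|` for every `w`. Taking `w = R⁻¹h` turns this into the claim, since
`|R⁻¹h|² = hᵀ (R R)⁻¹ h = hᵀ Σ h`.
-/

open Matrix MeasureTheory

lemma frobNorm_smul {n m : ℕ} (c : ℝ) (M : Matrix (Fin n) (Fin m) ℝ) :
    frobNorm (c • M) = |c| * frobNorm M := by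
  unfold frobNorm
  rw [← Real.sqrt_sq_eq_abs, ← Real.sqrt_mul (sq_nonneg c)]
  congr 1
  simp [Finset.mul_sum, mul_pow]

lemma frobNorm_le_mul_sqrt_of_forall_unit {n m k : ℕ}
    (M : (Fin n → ℝ) → Matrix (Fin m) (Fin k) ℝ) (hM : ∀ (c : ℝ) w, M (c • w) = c • M w)
    {C : ℝ} (hC : ∀ v : Fin n → ℝ, ∑ i, v i ^ 2 = 1 → frobNorm (M v) ≤ C) (w : Fin n → ℝ) :
    frobNorm (M w) ≤ C * Real.sqrt (w ⬝ᵥ w) := by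
  by_cases hw : w = 0
  · subst hw
    rw [← zero_smul ℝ (0 : Fin n → ℝ), hM, frobNorm_smul]
    simp
  set s := Real.sqrt (w ⬝ᵥ w)
  have hs : 0 < s := Real.sqrt_pos.2 (by simpa using dotProduct_self_star_pos_iff.2 hw)
  have hunit : ∑ i, (s⁻¹ • w) i ^ 2 = 1 := by
    have hss : s ^ 2 = ∑ i, w i ^ 2 := by
      rw [Real.sq_sqrt (by simpa using dotProduct_self_star_nonneg w)]
      simp [dotProduct, sq]
    simp only [Pi.smul_apply, smul_eq_mul, mul_pow, ← Finset.mul_sum, ← hss]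
    field_simp
  calc frobNorm (M w) = s * frobNorm (M (s⁻¹ • w)) := by
        rw [hM, frobNorm_smul, abs_of_pos (inv_pos.2 hs), ← mul_assoc, mul_inv_cancel₀ hs.ne',
          one_mul]
    _ ≤ s * C := mul_le_mul_of_nonneg_left (hC _ hunit) hs.le
    _ = C * s := mul_comm _ _

section Moments

variable {E : Type*} [MeasurableSpace E] {ν : Measure E} {m n : ℕ}

noncomputable def thirdMomentMatrix (ν : Measure E) (f : E → Fin n → ℝ) (w : Fin n → ℝ) :
    Matrix (Fin n) (Fin n) ℝ :=
  Matrix.of fun i j => ∫ x, f x i * f x j * (f x ⬝ᵥ w) ∂ν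

lemma thirdMomentMatrix_smul (f : E → Fin n → ℝ) (c : ℝ) (w : Fin n → ℝ) :
    thirdMomentMatrix ν f (c • w) = c • thirdMomentMatrix ν f w := by
  ext i j
  simp only [thirdMomentMatrix, Matrix.smul_apply, of_apply, smul_eq_mul, dotProduct_smul]
  rw [← integral_const_mul]
  congr 1 with x
  ring

lemma integral_mulVec_mul_mulVec_mul (A : Matrix (Fin m) (Fin n) ℝ) (f : E → Fin n → ℝ)
    (g : E → ℝ) (hfg : ∀ k l, Integrable (fun x => f x k * f x l * g x) ν) (i j : Fin m) :
    ∫ x, (A *ᵥ f x) i * (A *ᵥ f x) j * g x ∂ν =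
      (A * Matrix.of (fun k l => ∫ x, f x k * f x l * g x ∂ν) * Aᵀ) i j := by
  have hexpand : ∀ x, (A *ᵥ f x) i * (A *ᵥ f x) j * g x =
      ∑ l, ∑ k, A i k * A j l * (f x k * f x l * g x) := fun x => by
    simp only [mulVec, dotProduct, Finset.sum_mul, Finset.mul_sum]
    exact Finset.sum_congr rfl fun _ _ => Finset.sum_congr rfl fun _ _ => by ring
  simp only [hexpand, mul_apply, of_apply, transpose_apply, Finset.sum_mul]
  rw [integral_finsetSum _ fun l _ => integrable_finsetSum _ fun k _ => (hfg k l).const_mul _]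
  refine Finset.sum_congr rfl fun l _ => ?_
  rw [integral_finsetSum _ fun k _ => (hfg k l).const_mul _]
  exact Finset.sum_congr rfl fun k _ => by rw [integral_const_mul]; ring

lemma integrable_mul_mul_dotProduct {f : E → Fin n → ℝ}
    (hf : ∀ i j k, Integrable (fun x => f x i * f x j * f x k) ν) (w : Fin n → ℝ) (i j : Fin n) :
    Integrable (fun x => f x i * f x j * (f x ⬝ᵥ w)) ν := by
  simp only [dotProduct, Finset.mul_sum, ← mul_assoc]
  exact integrable_finsetSum _ fun k _ => (hf i j k).mul_const _

lemma thirdMomentMatrix_mulVec (A : Matrix (Fin m) (Fin n) ℝ) (f : E → Fin n → ℝ)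
    (hf : ∀ i j k, Integrable (fun x => f x i * f x j * f x k) ν) (w : Fin m → ℝ) :
    thirdMomentMatrix ν (fun x => A *ᵥ f x) w = A * thirdMomentMatrix ν f (Aᵀ *ᵥ w) * Aᵀ := by
  have hdot : ∀ x, A *ᵥ f x ⬝ᵥ w = f x ⬝ᵥ Aᵀ *ᵥ w := fun x => by
    rw [dotProduct_comm, dotProduct_mulVec, mulVec_transpose, dotProduct_comm]
  ext i j
  simp only [thirdMomentMatrix, of_apply, hdot]
  exact integral_mulVec_mul_mulVec_mul A f _ (integrable_mul_mul_dotProduct hf _) i j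

end Moments

lemma inv_mulVec_dotProduct_inv_mulVec {n : ℕ} {R S : Matrix (Fin n) (Fin n) ℝ} (hR : Rᵀ = R)
    (hRR : R * R = S⁻¹) (hS : IsUnit S) (h : Fin n → ℝ) :
    R⁻¹ *ᵥ h ⬝ᵥ R⁻¹ *ᵥ h = h ⬝ᵥ S *ᵥ h := by
  have hinv : R⁻¹ * R⁻¹ = S := by
    rw [← Matrix.mul_inv_rev, hRR, nonsing_inv_nonsing_inv _ ((isUnit_iff_isUnit_det S).1 hS)]
  rw [dotProduct_comm, dotProduct_mulVec, ← mulVec_transpose, transpose_nonsing_inv, hR,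
    mulVec_mulVec, hinv, dotProduct_comm]

lemma isUnit_of_mul_self_eq_inv {n : ℕ} {R S : Matrix (Fin n) (Fin n) ℝ}
    (hRR : R * R = S⁻¹) (hS : IsUnit S) : IsUnit R :=
  (isUnit_iff_isUnit_det R).2 <| isUnit_det_of_right_inverse (B := R * S) <| by
    rw [← mul_assoc, hRR, nonsing_inv_mul _ ((isUnit_iff_isUnit_det S).1 hS)]

theorem stmt_15_general {n : ℕ} (ν : Measure (Fin n → ℝ)) (C : ℝ)
    -- mean and covariance of ν (the tilted measure p_θ)
    (μ : Fin n → ℝ)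
    (Sig : Matrix (Fin n) (Fin n) ℝ)
    (hSigpd : Sig.PosDef)
    (hint3 : ∀ i j k, Integrable (fun x => (x i - μ i) * (x j - μ j) * (x k - μ k)) ν)
    -- R = Σ^{-1/2}; the normalization x ↦ R(x−μ) is isotropic
    (R : Matrix (Fin n) (Fin n) ℝ) (hRpsd : R.PosSemidef) (hRR : R * R = Sig⁻¹)
    -- third-moment bound for the isotropic normalization: for every unit vector v,
    -- ‖E[x̃ x̃ᵀ (x̃ᵀ v)]‖_F ≤ C with x̃ = R(x−μ)
    (hC : ∀ v : Fin n → ℝ, ∑ i, v i ^ 2 = 1 →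
      frobNorm (Matrix.of fun i j =>
        ∫ x, R.mulVec (x - μ) i * R.mulVec (x - μ) j * (R.mulVec (x - μ) ⬝ᵥ v) ∂ν) ≤ C) :
    -- ‖Σ^{-1/2} D³f(θ)[h] Σ^{-1/2}‖_F ≤ C ‖h‖_{∇²f(θ)},
    -- where D³f(θ)[h]_{ij} = E[(x−μ)_i (x−μ)_j ((x−μ)ᵀh)] is the third central moment
    ∀ h : Fin n → ℝ,
      frobNorm (R * (Matrix.of fun i j =>
          ∫ x, (x i - μ i) * (x j - μ j) * ((x - μ) ⬝ᵥ h) ∂ν) * R) ≤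
        C * Real.sqrt (h ⬝ᵥ Sig.mulVec h) := by
  intro h
  have hR : Rᵀ = R := hRpsd.isHermitian.eq
  have hRinv : R * R⁻¹ = 1 := mul_nonsing_inv R ((isUnit_iff_isUnit_det R).1
    (isUnit_of_mul_self_eq_inv hRR hSigpd.isUnit))
  have hmoment : ∀ w, thirdMomentMatrix ν (fun x => R *ᵥ (x - μ)) w =
      R * thirdMomentMatrix ν (fun x => x - μ) (R *ᵥ w) * R := fun w => by
    rw [thirdMomentMatrix_mulVec R (fun x => x - μ) hint3, hR]
  have hbound := frobNorm_le_mul_sqrt_of_forall_unit _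
    (thirdMomentMatrix_smul (ν := ν) (fun x => R *ᵥ (x - μ))) hC (R⁻¹ *ᵥ h)
  rwa [hmoment, mulVec_mulVec, hRinv, one_mulVec,
    inv_mulVec_dotProduct_inv_mulVec hR hRR hSigpd.isUnit] at hbound

theorem stmt_15 {n : ℕ} (ν : Measure (Fin n → ℝ)) [IsProbabilityMeasure ν] (C : ℝ)
    -- mean and covariance of ν (the tilted measure p_θ)
    (μ : Fin n → ℝ) (hμ : ∀ i, μ i = ∫ x, x i ∂ν)
    (Sig : Matrix (Fin n) (Fin n) ℝ)
    (hSig : ∀ i j, Sig i j = ∫ x, (x i - μ i) * (x j - μ j) ∂ν)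
    (hSigpd : Sig.PosDef)
    (hint2 : ∀ i j, Integrable (fun x => (x i - μ i) * (x j - μ j)) ν)
    (hint3 : ∀ i j k, Integrable (fun x => (x i - μ i) * (x j - μ j) * (x k - μ k)) ν)
    -- R = Σ^{-1/2}; the normalization x ↦ R(x−μ) is isotropic
    (R : Matrix (Fin n) (Fin n) ℝ) (hRpsd : R.PosSemidef) (hRR : R * R = Sig⁻¹)
    -- third-moment bound for the isotropic normalization: for every unit vector v,
    -- ‖E[x̃ x̃ᵀ (x̃ᵀ v)]‖_F ≤ C with x̃ = R(x−μ)
    (hC : ∀ v : Fin n → ℝ, ∑ i, v i ^ 2 = 1 →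
      frobNorm (Matrix.of fun i j =>
        ∫ x, R.mulVec (x - μ) i * R.mulVec (x - μ) j * (R.mulVec (x - μ) ⬝ᵥ v) ∂ν) ≤ C) :
    -- ‖Σ^{-1/2} D³f(θ)[h] Σ^{-1/2}‖_F ≤ C ‖h‖_{∇²f(θ)},
    -- where D³f(θ)[h]_{ij} = E[(x−μ)_i (x−μ)_j ((x−μ)ᵀh)] is the third central moment
    ∀ h : Fin n → ℝ,
      frobNorm (R * (Matrix.of fun i j =>
          ∫ x, (x i - μ i) * (x j - μ j) * ((x - μ) ⬝ᵥ h) ∂ν) * R) ≤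
        C * Real.sqrt (h ⬝ᵥ Sig.mulVec h) :=
  stmt_15_general ν C μ Sig hSigpd hint3 R hRpsd hRR hC
end
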